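/- arXiv:2111.13604 — 5 statements merged into one kernel-verified Lean document; each statement's English description precedes it below -/
import Mathlib

section
/- Under the dewetting condition, there exists Δ > 0 (one may take Δ = min{Δ_strip/6, c_F}) such that for every finite configuration D_n ⊂ L_F, V_n(D_n) ≥ −6c_F·n + Δ·#∂D_n, where ∂D_n is the set of atoms of D_n having fewer than 6 film neighbors. -/
noncomputable section
open scoped Classical

/-- Planar Euclidean distance on `ℝ × ℝ`. -/
def edist2 (a b : ℝ × ℝ) : ℝ := Real.sqrt ((a.1 - b.1) ^ 2 + (a.2 - b.2) ^ 2)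

/-- Lattice vector `t1 = (1,0)`. -/
def t1 : ℝ × ℝ := (1, 0)

/-- Lattice vector `t2 = (1/2, √3/2)`. -/
def t2 : ℝ × ℝ := (1 / 2, Real.sqrt 3 / 2)

/-- The half-plane triangular film lattice centered at `xF`. -/
def LF (xF : ℝ × ℝ) : Set (ℝ × ℝ) :=
  {p | ∃ (k1 : ℤ) (k2 : ℕ), p = xF + (k1 : ℝ) • t1 + (k2 : ℝ) • t2}

/-- Heitmann–Radin film-film potential (value at the forbidden range `s < 1` irrelevant
under the hypotheses, set to `0`). -/
def vFF (cF s : ℝ) : ℝ := if s = 1 then -cF else 0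

/-- The 6 nearest-neighbor directions of the triangular lattice. -/
def dirs : Finset (ℝ × ℝ) := {t1, -t1, t2, -t2, t2 - t1, t1 - t2}

/-- Local energy `E_loc(y) = cF · (number of the 6 nearest-neighbor lattice directions
from `y` not occupied by points of `D`)` for `y ∈ D`, and `0` otherwise. -/
def Eloc (cF : ℝ) (D : Finset (ℝ × ℝ)) (y : ℝ × ℝ) : ℝ :=
  if y ∈ D then cF * (6 - ((dirs.filter (fun d => y + d ∈ D)).card : ℝ)) else 0

/-- The film-lattice center `x_F⁰ = (0, eFS)` of the models `M⁰`, `M¹`. -/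
def xF0 (eFS : ℝ) : ℝ × ℝ := (0, eFS)

/-- In the model `M¹_Λ(1,q,r)` (substrate wall `{(k,0) : k ∈ qℤ ∪ (qℤ+r)}`, film
bottom row at height `eFS`), `p` has a substrate neighbor iff `p = (m, eFS)` with
`m ∈ qℤ ∪ (qℤ + r)`. -/
def hasSub (q r : ℕ) (eFS : ℝ) (p : ℝ × ℝ) : Prop :=
  ∃ m : ℤ, ((q : ℤ) ∣ m ∨ (q : ℤ) ∣ (m - (r : ℤ))) ∧ p = ((m : ℝ), eFS)

/-- One-body substrate potential of `M¹`: `-cS` on sites with a substrate neighbor. -/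
def v1sub (q r : ℕ) (eFS cS : ℝ) (x : ℝ × ℝ) : ℝ :=
  if hasSub q r eFS x then -cS else 0

/-- Total configurational energy `V_n(D) = Σ_{x≠y∈D} v_FF(|x-y|) + Σ_{x∈D} v¹(x)`. -/
def Vtot (cF : ℝ) (v1 : ℝ × ℝ → ℝ) (D : Finset (ℝ × ℝ)) : ℝ :=
  (∑ x ∈ D, ∑ y ∈ D.erase x, vFF cF (edist2 x y)) + ∑ x ∈ D, v1 x

/-- Boundary `∂D` of a configuration: atoms with fewer than 6 film neighbors. -/
def bdry (D : Finset (ℝ × ℝ)) : Finset (ℝ × ℝ) :=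
  D.filter (fun x => (dirs.filter (fun d => x + d ∈ D)).card < 6)

def O6 : Finset (ℤ × ℤ) := {(1,0),(-1,0),(0,1),(0,-1),(-1,1),(1,-1)}

def subp (q r : ℕ) (m : ℤ) : Prop := (q:ℤ) ∣ m ∨ (q:ℤ) ∣ (m - (r:ℤ))

lemma not_dvd_of_btw (q c : ℤ) (h1 : 0 < c) (h2 : c < q) : ¬ q ∣ c :=
  fun h => absurd (Int.le_of_dvd h1 h) (not_le.mpr h2)

/-- generic charging: a set `T` of bottom atoms whose `e`-shifted column is non-substrate
is at most (non-substrate bottom atoms) + (bottom atoms missing their `(e,0)` neighbor). -/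
lemma charge (E T : Finset (ℤ×ℤ)) (P : ℤ → Prop) (e : ℤ)
    (hT : T ⊆ E.filter (fun z => z.2 = 0))
    (hP : ∀ z ∈ T, ¬ P (z.1 + e)) :
    T.card ≤ (E.filter (fun z => z.2 = 0 ∧ ¬ P z.1)).card
      + ((E.filter (fun z => z.2 = 0)).filter (fun z => z + (e,0) ∉ E)).card := by
  classical
  have hsplit := Finset.card_filter_add_card_filter_not
    (s := T) (p := fun z => z + (e,0) ∈ E)
  have h1 : (T.filter (fun z => z + (e,0) ∈ E)).card
      ≤ (E.filter (fun z => z.2 = 0 ∧ ¬ P z.1)).card := by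
    apply Finset.card_le_card_of_injOn (fun z => z + (e,0))
    · intro z hz
      simp only [Finset.mem_coe, Finset.mem_filter] at hz ⊢
      obtain ⟨hzT, hzE⟩ := hz
      have hb := hT hzT
      simp only [Finset.mem_filter] at hb
      refine ⟨hzE, ?_, ?_⟩
      · simpa using hb.2
      · simpa using hP z hzT
    · intro a _ b _ hab
      simpa using hab
  have h2 : (T.filter (fun z => z + (e,0) ∉ E)).card
      ≤ ((E.filter (fun z => z.2 = 0)).filter (fun z => z + (e,0) ∉ E)).card := by
    apply Finset.card_le_card
    intro z hz
    simp only [Finset.mem_filter] at hz ⊢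
    exact ⟨by simpa using (Finset.mem_filter.mp (hT hz.1)), hz.2⟩
  omega

set_option maxHeartbeats 2000000 in
lemma core (q r : ℕ) (hr : 1 ≤ r) (hrq : 2*r ≤ q) (E : Finset (ℤ×ℤ))
    (hE : ∀ z ∈ E, 0 ≤ z.2) :
    (if 1 < r then 6 else if 2 < q then 5 else 4) *
      (E.filter (fun z => z.2 = 0 ∧ subp q r z.1)).card
      ≤ ∑ o ∈ O6, (E.filter (fun z => z + o ∉ E)).card := by
  classical
  set miss : ℤ×ℤ → ℕ := fun o => (E.filter (fun z => z + o ∉ E)).card with hmiss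
  set Bo : Finset (ℤ×ℤ) := E.filter (fun z => z.2 = 0) with hBo
  -- expand the sum
  have hsum : ∑ o ∈ O6, miss o
      = miss (1,0) + miss (-1,0) + miss (0,1) + miss (0,-1) + miss (-1,1) + miss (1,-1) := by
    simp only [O6]
    rw [Finset.sum_insert (by decide), Finset.sum_insert (by decide),
      Finset.sum_insert (by decide), Finset.sum_insert (by decide),
      Finset.sum_insert (by decide), Finset.sum_singleton]
    omega
  -- bottom atoms miss their two lower neighbors
  have hdown : Bo.card ≤ miss (0,-1) := by
    apply Finset.card_le_card
    intro z hz
    simp only [hBo, Finset.mem_filter] at hz ⊢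
    refine ⟨hz.1, fun hmem => ?_⟩
    have h2 : (0:ℤ) ≤ z.2 + (-1) := hE _ hmem
    omega
  have hdownr : Bo.card ≤ miss (1,-1) := by
    apply Finset.card_le_card
    intro z hz
    simp only [hBo, Finset.mem_filter] at hz ⊢
    refine ⟨hz.1, fun hmem => ?_⟩
    have h2 : (0:ℤ) ≤ z.2 + (-1) := hE _ hmem
    omega
  -- each bottom atom's column has a top, missing its up-neighbor
  have hup : Bo.card ≤ miss (0,1) := by
    set f : ℤ×ℤ → ℤ×ℤ := fun z =>
      if h : ((E.filter (fun w => w.1 = z.1)).image Prod.snd).Nonempty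
      then (z.1, ((E.filter (fun w => w.1 = z.1)).image Prod.snd).max' h) else z with hf
    apply Finset.card_le_card_of_injOn f
    · intro z hz
      simp only [hBo, Finset.mem_coe, Finset.mem_filter] at hz
      have hne : ((E.filter (fun w => w.1 = z.1)).image Prod.snd).Nonempty :=
        ⟨z.2, Finset.mem_image.mpr ⟨z, Finset.mem_filter.mpr ⟨hz.1, rfl⟩, rfl⟩⟩
      have hfz : f z = (z.1, ((E.filter (fun w => w.1 = z.1)).image Prod.snd).max' hne) := by
        simp only [hf]
        rw [dif_pos hne]
      set mx := ((E.filter (fun w => w.1 = z.1)).image Prod.snd).max' hne with hmx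
      have hmem : (z.1, mx) ∈ E := by
        have := Finset.max'_mem _ hne
        rw [Finset.mem_image] at this
        obtain ⟨w, hw, hw2⟩ := this
        rw [Finset.mem_filter] at hw
        have hwx : w = (z.1, mx) := Prod.ext hw.2 hw2
        rw [← hwx]; exact hw.1
      have hnot : (z.1, mx) + (0,1) ∉ E := by
        intro hmem2
        have : mx + 1 ∈ (E.filter (fun w => w.1 = z.1)).image Prod.snd := by
          refine Finset.mem_image.mpr ⟨(z.1, mx) + (0,1), Finset.mem_filter.mpr ⟨hmem2, by simp⟩, by simp⟩
        have := Finset.le_max' _ _ this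
        omega
      rw [hfz]
      exact Finset.mem_filter.mpr ⟨hmem, hnot⟩
    · intro a ha b hb hab
      simp only [hBo, Finset.coe_filter, Set.mem_setOf_eq] at ha hb
      have hnea : ((E.filter (fun w => w.1 = a.1)).image Prod.snd).Nonempty :=
        ⟨a.2, Finset.mem_image.mpr ⟨a, Finset.mem_filter.mpr ⟨ha.1, rfl⟩, rfl⟩⟩
      have hneb : ((E.filter (fun w => w.1 = b.1)).image Prod.snd).Nonempty :=
        ⟨b.2, Finset.mem_image.mpr ⟨b, Finset.mem_filter.mpr ⟨hb.1, rfl⟩, rfl⟩⟩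
      simp only [hf, dif_pos hnea, dif_pos hneb, Prod.mk.injEq] at hab
      exact Prod.ext hab.1 (by rw [ha.2, hb.2])
  -- each bottom atom's NW-diagonal has a top, missing its (-1,1)-neighbor
  have hdiag : Bo.card ≤ miss (-1,1) := by
    set f : ℤ×ℤ → ℤ×ℤ := fun z =>
      if h : ((E.filter (fun w => w.1 + w.2 = z.1 + z.2)).image Prod.snd).Nonempty
      then (z.1 + z.2 - Finset.max' _ h,
            Finset.max' _ h) else z with hf
    apply Finset.card_le_card_of_injOn f
    · intro z hz
      simp only [hBo, Finset.mem_coe, Finset.mem_filter] at hz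
      have hne : ((E.filter (fun w => w.1 + w.2 = z.1 + z.2)).image Prod.snd).Nonempty :=
        ⟨z.2, Finset.mem_image.mpr ⟨z, Finset.mem_filter.mpr ⟨hz.1, rfl⟩, rfl⟩⟩
      have hfz : f z = (z.1 + z.2 - Finset.max' _ hne,
          Finset.max' _ hne) := by
        simp only [hf]
        rw [dif_pos hne]
      set mx := Finset.max' _ hne with hmx
      have hmem : (z.1 + z.2 - mx, mx) ∈ E := by
        have := Finset.max'_mem _ hne
        rw [Finset.mem_image] at this
        obtain ⟨w, hw, hw2⟩ := this
        rw [Finset.mem_filter] at hw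
        have hwx : w = (z.1 + z.2 - mx, mx) := Prod.ext (by simp only [Prod.fst]; omega) hw2
        rw [← hwx]; exact hw.1
      have hnot : (z.1 + z.2 - mx, mx) + (-1,1) ∉ E := by
        intro hmem2
        have : mx + 1 ∈ (E.filter (fun w => w.1 + w.2 = z.1 + z.2)).image Prod.snd := by
          refine Finset.mem_image.mpr ⟨(z.1 + z.2 - mx, mx) + (-1,1),
            Finset.mem_filter.mpr ⟨hmem2, by simp; ring⟩, by simp⟩
        have := Finset.le_max' _ _ this
        omega
      rw [hfz]
      exact Finset.mem_filter.mpr ⟨hmem, hnot⟩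
    · intro a ha b hb hab
      simp only [hBo, Finset.coe_filter, Set.mem_setOf_eq] at ha hb
      have hnea : ((E.filter (fun w => w.1 + w.2 = a.1 + a.2)).image Prod.snd).Nonempty :=
        ⟨a.2, Finset.mem_image.mpr ⟨a, Finset.mem_filter.mpr ⟨ha.1, rfl⟩, rfl⟩⟩
      have hneb : ((E.filter (fun w => w.1 + w.2 = b.1 + b.2)).image Prod.snd).Nonempty :=
        ⟨b.2, Finset.mem_image.mpr ⟨b, Finset.mem_filter.mpr ⟨hb.1, rfl⟩, rfl⟩⟩
      simp only [hf, dif_pos hnea, dif_pos hneb, Prod.mk.injEq] at hab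
      have h2 : a.2 = b.2 := by rw [ha.2, hb.2]
      exact Prod.ext (by omega) h2
  -- horizontal misses of bottom atoms
  have hleft : (Bo.filter (fun z => z + (-1,0) ∉ E)).card ≤ miss (-1,0) := by
    apply Finset.card_le_card
    intro z hz
    simp only [hBo, Finset.mem_filter] at hz ⊢
    exact ⟨hz.1.1, hz.2⟩
  have hright : (Bo.filter (fun z => z + (1,0) ∉ E)).card ≤ miss (1,0) := by
    apply Finset.card_le_card
    intro z hz
    simp only [hBo, Finset.mem_filter] at hz ⊢
    exact ⟨hz.1.1, hz.2⟩
  -- substrate/non-substrate split of the bottom row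
  have hSubeq : E.filter (fun z => z.2 = 0 ∧ subp q r z.1) = Bo.filter (fun z => subp q r z.1) := by
    rw [hBo, Finset.filter_filter]
  set S := (Bo.filter (fun z => subp q r z.1)).card with hS
  set NS := (Bo.filter (fun z => ¬ subp q r z.1)).card with hNS
  have hBsplit : S + NS = Bo.card := Finset.card_filter_add_card_filter_not _
  have hNSeq : Bo.filter (fun z => ¬ subp q r z.1) = E.filter (fun z => z.2 = 0 ∧ ¬ subp q r z.1) := by
    rw [hBo, Finset.filter_filter]
  rw [hSubeq, hsum, ← hS]
  have hq2 : 2 ≤ q := by omega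
  -- case split
  by_cases hr1 : 1 < r
  · -- r ≥ 2 : substrate sites are isolated
    have hq4 : 4 ≤ q := by omega
    have hiso : ∀ m : ℤ, subp q r m → (¬ subp q r (m-1)) ∧ ¬ subp q r (m+1) := by
      intro m hm
      have hq : (4:ℤ) ≤ (q:ℤ) := by exact_mod_cast hq4
      have hrr : (2:ℤ) ≤ (r:ℤ) := by exact_mod_cast hr1
      have hrq' : 2*(r:ℤ) ≤ (q:ℤ) := by exact_mod_cast hrq
      constructor <;> rintro (h | h) <;> rcases hm with hm | hm
      · have hd : (q:ℤ) ∣ 1 := by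
          have := dvd_sub hm h; rwa [show m - (m-1) = 1 by ring] at this
        exact not_dvd_of_btw _ 1 (by omega) (by omega) hd
      · have hd : (q:ℤ) ∣ ((r:ℤ)-1) := by
          have := dvd_sub h hm; rwa [show (m-1) - (m-(r:ℤ)) = (r:ℤ)-1 by ring] at this
        exact not_dvd_of_btw _ _ (by omega) (by omega) hd
      · have hd : (q:ℤ) ∣ ((r:ℤ)+1) := by
          have := dvd_sub hm h; rwa [show m - (m-1-(r:ℤ)) = (r:ℤ)+1 by ring] at this
        exact not_dvd_of_btw _ _ (by omega) (by omega) hd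
      · have hd : (q:ℤ) ∣ 1 := by
          have := dvd_sub hm h; rwa [show (m-(r:ℤ)) - (m-1-(r:ℤ)) = 1 by ring] at this
        exact not_dvd_of_btw _ 1 (by omega) (by omega) hd
      · have hd : (q:ℤ) ∣ 1 := by
          have := dvd_sub h hm; rwa [show (m+1) - m = 1 by ring] at this
        exact not_dvd_of_btw _ 1 (by omega) (by omega) hd
      · have hd : (q:ℤ) ∣ ((r:ℤ)+1) := by
          have := dvd_sub h hm; rwa [show (m+1) - (m-(r:ℤ)) = (r:ℤ)+1 by ring] at this
        exact not_dvd_of_btw _ _ (by omega) (by omega) hd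
      · have hd : (q:ℤ) ∣ ((r:ℤ)-1) := by
          have := dvd_sub hm h; rwa [show m - (m+1-(r:ℤ)) = (r:ℤ)-1 by ring] at this
        exact not_dvd_of_btw _ _ (by omega) (by omega) hd
      · have hd : (q:ℤ) ∣ 1 := by
          have := dvd_sub h hm; rwa [show (m+1-(r:ℤ)) - (m-(r:ℤ)) = 1 by ring] at this
        exact not_dvd_of_btw _ 1 (by omega) (by omega) hd
    have hcl := charge E (Bo.filter (fun z => subp q r z.1)) (subp q r) (-1)
      (by rw [hBo]; exact Finset.filter_subset _ _)
      (by intro z hz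
          rw [Finset.mem_filter] at hz
          have := (hiso z.1 hz.2).1
          simpa [sub_eq_add_neg] using this)
    have hcr := charge E (Bo.filter (fun z => subp q r z.1)) (subp q r) 1
      (by rw [hBo]; exact Finset.filter_subset _ _)
      (by intro z hz
          rw [Finset.mem_filter] at hz
          exact (hiso z.1 hz.2).2)
    rw [← hNSeq, ← hNS, ← hS, ← hBo] at hcl hcr
    simp only [if_pos hr1]
    omega
  · -- r = 1
    have hre : r = 1 := by omega
    by_cases hq3 : 2 < q
    · -- q ≥ 3 : substrate pairs
      have hqz : (3:ℤ) ≤ (q:ℤ) := by exact_mod_cast hq3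
      set T0 := Bo.filter (fun z => (q:ℤ) ∣ z.1) with hT0
      set T1 := Bo.filter (fun z => ¬ (q:ℤ) ∣ z.1 ∧ (q:ℤ) ∣ (z.1 - 1)) with hT1
      have hsub01 : Bo.filter (fun z => subp q r z.1) ⊆ T0 ∪ T1 := by
        intro z hz
        rw [Finset.mem_filter] at hz
        rcases Classical.em ((q:ℤ) ∣ z.1) with h | h
        · exact Finset.mem_union_left _ (Finset.mem_filter.mpr ⟨hz.1, h⟩)
        · refine Finset.mem_union_right _ (Finset.mem_filter.mpr ⟨hz.1, h, ?_⟩)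
          rcases hz.2 with h' | h'
          · exact absurd h' h
          · simpa [hre] using h'
      have hScard : S ≤ T0.card + T1.card :=
        le_trans (Finset.card_le_card hsub01) (Finset.card_union_le _ _)
      have hc0 := charge E T0 (subp q r) (-1)
        (by rw [hT0, hBo]; exact Finset.filter_subset _ _)
        (by intro z hz
            rw [hT0, Finset.mem_filter] at hz
            rintro (h | h)
            · have hd : (q:ℤ) ∣ 1 := by
                have := dvd_sub hz.2 h
                rwa [show z.1 - (z.1 + -1) = 1 by ring] at this
              exact not_dvd_of_btw _ 1 (by omega) (by omega) hd
            · have hd : (q:ℤ) ∣ 2 := by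
                have := dvd_sub hz.2 h
                rwa [hre, show z.1 - (z.1 + -1 - ((1:ℕ):ℤ)) = 2 by push_cast; ring] at this
              exact not_dvd_of_btw _ 2 (by omega) (by omega) hd)
      have hc1 := charge E T1 (subp q r) 1
        (by rw [hT1, hBo]; exact Finset.filter_subset _ _)
        (by intro z hz
            rw [hT1, Finset.mem_filter] at hz
            rintro (h | h)
            · have hd : (q:ℤ) ∣ 2 := by
                have := dvd_sub h hz.2.2
                rwa [show (z.1 + 1) - (z.1 - 1) = 2 by ring] at this
              exact not_dvd_of_btw _ 2 (by omega) (by omega) hd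
            · refine hz.2.1 ?_
              rw [hre] at h
              rwa [show z.1 + 1 - ((1:ℕ):ℤ) = z.1 by push_cast; ring] at h)
      rw [← hNSeq, ← hNS, ← hBo] at hc0 hc1
      simp only [if_neg hr1, if_pos hq3]
      omega
    · -- q = 2
      simp only [if_neg hr1, if_neg hq3]
      have hSB : S ≤ Bo.card := by
        rw [hS]; exact Finset.card_le_card (Finset.filter_subset _ _)
      omega

/-! ### Geometry of the triangular lattice -/

def Phi0 (z : ℤ × ℤ) : ℝ × ℝ := ((z.1 : ℝ) + (z.2 : ℝ)/2, (z.2 : ℝ) * (Real.sqrt 3 / 2))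

lemma sqrt3_pos : (0:ℝ) < Real.sqrt 3 := Real.sqrt_pos.mpr (by norm_num)

lemma Phi0_inj : Function.Injective Phi0 := by
  intro z w h
  simp only [Phi0, Prod.mk.injEq] at h
  have hs : Real.sqrt 3 / 2 ≠ 0 := by positivity
  have h2 : (z.2:ℝ) = (w.2:ℝ) := mul_right_cancel₀ hs h.2
  have h2' : z.2 = w.2 := by exact_mod_cast h2
  have h1 : (z.1:ℝ) = (w.1:ℝ) := by
    have := h.1; rw [h2] at this; linarith
  have h1' : z.1 = w.1 := by exact_mod_cast h1
  exact Prod.ext h1' h2'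

lemma Phi0_zero : Phi0 0 = 0 := by
  simp only [Phi0, Prod.ext_iff]
  norm_num

lemma Phi0_add (z w : ℤ × ℤ) : Phi0 (z + w) = Phi0 z + Phi0 w := by
  simp only [Phi0, Prod.ext_iff, Prod.fst_add, Prod.snd_add]
  constructor <;> push_cast <;> ring

lemma mem_LF_iff (eFS : ℝ) (p : ℝ × ℝ) :
    p ∈ LF (xF0 eFS) ↔ ∃ z : ℤ × ℤ, 0 ≤ z.2 ∧ p = xF0 eFS + Phi0 z := by
  constructor
  · rintro ⟨k1, k2, rfl⟩
    refine ⟨(k1, (k2:ℤ)), by simp, ?_⟩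
    simp only [xF0, t1, t2, Phi0, Prod.ext_iff, Prod.fst_add, Prod.snd_add, Prod.smul_mk,
      smul_eq_mul]
    constructor <;> push_cast <;> ring
  · rintro ⟨z, hz, rfl⟩
    refine ⟨z.1, z.2.toNat, ?_⟩
    have h2 : ((z.2.toNat : ℕ) : ℝ) = (z.2 : ℝ) := by
      rw [← Int.cast_natCast, Int.toNat_of_nonneg hz]
    simp only [xF0, t1, t2, Phi0, Prod.ext_iff, Prod.fst_add, Prod.snd_add, Prod.smul_mk,
      smul_eq_mul]
    constructor <;> push_cast <;> rw [h2] <;> ring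

lemma int_norm_one (a b : ℤ) (h : a^2 + a*b + b^2 = 1) : (a,b) ∈ O6 := by
  have h1 : (2*a+b)^2 + 3*b^2 = 4 := by nlinarith
  have h2 : (a+2*b)^2 + 3*a^2 = 4 := by nlinarith
  have hb : b^2 ≤ 1 := by nlinarith
  have ha : a^2 ≤ 1 := by nlinarith
  have hb1 : -1 ≤ b ∧ b ≤ 1 := by constructor <;> nlinarith
  have ha1 : -1 ≤ a ∧ a ≤ 1 := by constructor <;> nlinarith
  obtain ⟨hb1, hb2⟩ := hb1; obtain ⟨ha1, ha2⟩ := ha1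
  interval_cases a <;> interval_cases b <;> simp_all <;> decide

lemma O6_norm (p : ℤ × ℤ) (hp : p ∈ O6) : p.1^2 + p.1*p.2 + p.2^2 = 1 := by
  fin_cases hp <;> decide

lemma edist2_eq_one_iff (A : ℝ × ℝ) (z w : ℤ × ℤ) :
    edist2 (A + Phi0 z) (A + Phi0 w) = 1 ↔ w - z ∈ O6 := by
  have hs : Real.sqrt 3 ^ 2 = 3 := Real.sq_sqrt (by norm_num)
  set a := z.1 - w.1 with ha
  set b := z.2 - w.2 with hb
  have key : edist2 (A + Phi0 z) (A + Phi0 w)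
      = Real.sqrt (((a^2 + a*b + b^2 : ℤ) : ℝ)) := by
    simp only [edist2, Phi0, Prod.fst_add, Prod.snd_add]
    congr 1
    push_cast [ha, hb]
    nlinarith [hs]
  rw [key]
  rw [show Real.sqrt (((a^2 + a*b + b^2 : ℤ) : ℝ)) = 1 ↔ ((a^2 + a*b + b^2 : ℤ) : ℝ) = 1 by
    constructor
    · intro h
      have hnn : (0:ℝ) ≤ ((a^2 + a*b + b^2 : ℤ) : ℝ) := by
        have : (0:ℤ) ≤ a^2 + a*b + b^2 := by nlinarith [sq_nonneg (a+b), sq_nonneg a, sq_nonneg b]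
        exact_mod_cast this
      have := Real.sq_sqrt hnn
      rw [h] at this; linarith
    · intro h; rw [h]; exact Real.sqrt_one]
  have hcast : ((a^2 + a*b + b^2 : ℤ) : ℝ) = 1 ↔ a^2 + a*b + b^2 = 1 := by
    exact_mod_cast Iff.rfl
  rw [hcast]
  constructor
  · intro h
    have h' : (w.1 - z.1)^2 + (w.1 - z.1)*(w.2 - z.2) + (w.2 - z.2)^2 = 1 := by
      rw [ha, hb] at h; nlinarith [h]
    have := int_norm_one (w.1 - z.1) (w.2 - z.2) h'
    exact this
  · intro h
    have := O6_norm _ h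
    simp only [Prod.fst_sub, Prod.snd_sub] at this
    rw [ha, hb]; nlinarith [this]

lemma dirs_eq_image : dirs = O6.image Phi0 := by
  have e1 : Phi0 (1,0) = t1 := by
    simp only [Phi0, t1, Prod.ext_iff]; norm_num
  have e2 : Phi0 (-1,0) = -t1 := by
    simp only [Phi0, t1, Prod.ext_iff, Prod.fst_neg, Prod.snd_neg]; norm_num
  have e3 : Phi0 (0,1) = t2 := by
    simp only [Phi0, t2, Prod.ext_iff]; norm_num
  have e4 : Phi0 (0,-1) = -t2 := by
    simp only [Phi0, t2, Prod.ext_iff, Prod.fst_neg, Prod.snd_neg]; norm_num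
  have e5 : Phi0 (-1,1) = t2 - t1 := by
    simp only [Phi0, t1, t2, Prod.ext_iff, Prod.fst_sub, Prod.snd_sub]; norm_num
  have e6 : Phi0 (1,-1) = t1 - t2 := by
    simp only [Phi0, t1, t2, Prod.ext_iff, Prod.fst_sub, Prod.snd_sub]; norm_num
  simp only [O6, Finset.image_insert, Finset.image_singleton, e1, e2, e3, e4, e5, e6]
  rfl

lemma hasSub_iff (q r : ℕ) (eFS : ℝ) (z : ℤ × ℤ) :
    hasSub q r eFS (xF0 eFS + Phi0 z) ↔ (z.2 = 0 ∧ subp q r z.1) := by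
  have hs : Real.sqrt 3 / 2 ≠ 0 := by positivity
  constructor
  · rintro ⟨m, hdvd, heq⟩
    simp only [xF0, Phi0, Prod.ext_iff, Prod.fst_add, Prod.snd_add] at heq
    have h2 : (z.2:ℝ) * (Real.sqrt 3 / 2) = 0 := by linarith [heq.2]
    have h2' : (z.2:ℝ) = 0 := by
      rcases mul_eq_zero.mp h2 with h | h
      · exact h
      · exact absurd h hs
    have hz2 : z.2 = 0 := by exact_mod_cast h2'
    have h1 : (z.1:ℝ) = (m:ℝ) := by
      have := heq.1; rw [h2'] at this; linarith
    have hz1 : z.1 = m := by exact_mod_cast h1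
    exact ⟨hz2, by rw [hz1]; exact hdvd⟩
  · rintro ⟨hz2, hdvd⟩
    refine ⟨z.1, hdvd, ?_⟩
    simp only [xF0, Phi0, Prod.ext_iff, Prod.fst_add, Prod.snd_add, hz2]
    norm_num

/-- under the dewetting condition there is `Δ > 0` such that every finite
configuration `D ⊆ LF` satisfies `V_n(D) ≥ -6cF·n + Δ·#∂D`. -/
theorem energy_boundary_lower_bound (q r : ℕ) (hr : 1 ≤ r) (hrq : 2 * r ≤ q)
    (eFS cF cS : ℝ) (heFS : 0 < eFS) (hcF : 0 < cF) (hcS : 0 < cS)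
    (hdew : (1 < r → cS < 6 * cF) ∧ (r = 1 ∧ 2 < q → cS < 5 * cF) ∧
      (r = 1 ∧ q = 2 → cS < 4 * cF)) :
    ∃ Δ > 0, ∀ D : Finset (ℝ × ℝ), ↑D ⊆ LF (xF0 eFS) →
      -6 * cF * D.card + Δ * (bdry D).card ≤ Vtot cF (v1sub q r eFS cS) D := by
  classical
  obtain ⟨αR, hαR⟩ : ∃ αR : ℝ, αR = if 1 < r then 6 else if 2 < q then 5 else 4 := ⟨_, rfl⟩
  have hα4 : (4:ℝ) ≤ αR := by rw [hαR]; split_ifs <;> norm_num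
  have hα0 : (0:ℝ) < αR := by linarith
  have hcs : cS < αR * cF := by
    rw [hαR]
    split_ifs with h1 h2
    · linarith [hdew.1 h1]
    · linarith [hdew.2.1 ⟨by omega, h2⟩]
    · linarith [hdew.2.2 ⟨by omega, by omega⟩]
  have hΔpos : 0 < cF - cS / αR := by
    rw [sub_pos, div_lt_iff₀ hα0]; linarith
  refine ⟨cF - cS / αR, hΔpos, ?_⟩
  intro D hD
  obtain ⟨Δ, hΔdef⟩ : ∃ d : ℝ, d = cF - cS / αR := ⟨_, rfl⟩
  rw [← hΔdef]
  have hΔpos2 : 0 < Δ := by rw [hΔdef]; exact hΔpos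
  set A := xF0 eFS with hA
  have hrepr : ∀ p ∈ D, ∃ z : ℤ × ℤ, 0 ≤ z.2 ∧ A + Phi0 z = p := by
    intro p hp
    obtain ⟨z, hz, hpz⟩ := (mem_LF_iff eFS p).mp (hD hp)
    exact ⟨z, hz, hpz.symm⟩
  choose! ψ hψ2 hψeq using hrepr
  set E := D.image ψ with hE
  have hAinj : ∀ z w : ℤ × ℤ, A + Phi0 z = A + Phi0 w → z = w := by
    intro z w h
    exact Phi0_inj (add_left_cancel h)
  have hmemE : ∀ z : ℤ × ℤ, z ∈ E ↔ A + Phi0 z ∈ D := by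
    intro z
    constructor
    · intro hz
      obtain ⟨p, hp, hpz⟩ := Finset.mem_image.mp hz
      rw [← hpz, hψeq p hp]
      exact hp
    · intro hz
      exact Finset.mem_image.mpr ⟨_, hz, hAinj _ _ (hψeq _ hz)⟩
  have hψD : ∀ p ∈ D, ψ p ∈ E := fun p hp => Finset.mem_image.mpr ⟨p, hp, rfl⟩
  have hE2 : ∀ z ∈ E, 0 ≤ z.2 := by
    intro z hz
    obtain ⟨p, hp, hpz⟩ := Finset.mem_image.mp hz
    rw [← hpz]; exact hψ2 p hp
  have hinjD : ∀ p ∈ D, ∀ p' ∈ D, ψ p = ψ p' → p = p' := by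
    intro p hp p' hp' h
    rw [← hψeq p hp, ← hψeq p' hp', h]
  have hcardE : E.card = D.card := Finset.card_image_of_injOn hinjD
  have hsumtr : ∀ F : ℝ × ℝ → ℝ, ∑ p ∈ D, F p = ∑ z ∈ E, F (A + Phi0 z) := by
    intro F
    rw [hE, Finset.sum_image hinjD]
    exact (Finset.sum_congr rfl (fun p hp => by rw [hψeq p hp])).symm
  set N' : ℤ × ℤ → ℕ := fun z => (O6.filter (fun o => z + o ∈ E)).card with hN'
  have hNcount : ∀ z : ℤ × ℤ,
      (dirs.filter (fun d => (A + Phi0 z) + d ∈ D)).card = N' z := by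
    intro z
    rw [dirs_eq_image, Finset.filter_image, Finset.card_image_of_injective _ Phi0_inj]
    congr 1
    apply Finset.filter_congr
    intro o _
    rw [add_assoc, ← Phi0_add]
    exact (hmemE (z + o)).symm
  -- pair interaction energy
  have hpair : ∀ z ∈ E, ∑ y ∈ D.erase (A + Phi0 z), vFF cF (edist2 (A + Phi0 z) y)
      = -cF * (N' z : ℝ) := by
    intro z hz
    set x := A + Phi0 z with hx
    have hset : (D.erase x).filter (fun y => edist2 x y = 1)
        = (dirs.filter (fun d => x + d ∈ D)).image (fun d => x + d) := by
      apply Finset.ext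
      intro y
      simp only [Finset.mem_filter, Finset.mem_erase, Finset.mem_image]
      constructor
      · rintro ⟨⟨hyx, hyD⟩, hdist⟩
        obtain ⟨w, hw2, hwz⟩ := (mem_LF_iff eFS y).mp (hD hyD)
        rw [hwz] at hdist hyD ⊢
        rw [hx] at hdist
        have hwo : w - z ∈ O6 := (edist2_eq_one_iff A z w).mp hdist
        have hxw : x + Phi0 (w - z) = A + Phi0 w := by
          rw [hx, add_assoc, ← Phi0_add, add_sub_cancel]
        refine ⟨Phi0 (w - z), ⟨?_, ?_⟩, ?_⟩
        · rw [dirs_eq_image]; exact Finset.mem_image_of_mem _ hwo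
        · rw [hxw]; exact hyD
        · exact hxw
      · rintro ⟨d, ⟨hd, hdD⟩, rfl⟩
        rw [dirs_eq_image] at hd
        obtain ⟨o, ho, rfl⟩ := Finset.mem_image.mp hd
        refine ⟨⟨?_, hdD⟩, ?_⟩
        · intro h
          have h0 : Phi0 o = 0 := by
            have := add_eq_left.mp h
            exact this
          have : o = 0 := Phi0_inj (by rw [h0, Phi0_zero])
          rw [this] at ho
          exact absurd ho (by decide)
        · rw [hx, add_assoc, ← Phi0_add]
          exact (edist2_eq_one_iff A z (z + o)).mpr (by simpa using ho)
    have hstep : ∑ y ∈ D.erase x, vFF cF (edist2 x y)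
        = ∑ y ∈ (D.erase x).filter (fun y => edist2 x y = 1), (-cF) := by
      rw [Finset.sum_filter]
      exact Finset.sum_congr rfl (fun y _ => rfl)
    rw [hstep, Finset.sum_const, hset,
      Finset.card_image_of_injective _ (fun y₁ y₂ h => by exact add_left_cancel h :
        Function.Injective (fun d => x + d)), hNcount z, nsmul_eq_mul]
    ring
  -- substrate energy
  set Scard := (E.filter (fun z => z.2 = 0 ∧ subp q r z.1)).card with hScard
  have hv1 : ∑ p ∈ D, v1sub q r eFS cS p = -cS * (Scard : ℝ) := by
    rw [hsumtr]
    have hterm : ∀ z ∈ E, v1sub q r eFS cS (A + Phi0 z)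
        = if (z.2 = 0 ∧ subp q r z.1) then -cS else 0 := by
      intro z _
      rw [hA]
      simp only [v1sub]
      by_cases h : z.2 = 0 ∧ subp q r z.1
      · rw [if_pos ((hasSub_iff q r eFS z).mpr h), if_pos h]
      · rw [if_neg (fun hc => h ((hasSub_iff q r eFS z).mp hc)), if_neg h]
    rw [Finset.sum_congr rfl hterm, ← Finset.sum_filter, Finset.sum_const, nsmul_eq_mul]
    ring
  -- total energy identity
  have hV : Vtot cF (v1sub q r eFS cS) D
      = -cF * (∑ z ∈ E, (N' z : ℝ)) - cS * (Scard : ℝ) := by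
    rw [Vtot, hsumtr (fun p => ∑ y ∈ D.erase p, vFF cF (edist2 p y)),
      Finset.sum_congr rfl hpair, hv1, ← Finset.mul_sum]
    ring
  -- combinatorial bounds
  set M := ∑ o ∈ O6, (E.filter (fun z => z + o ∉ E)).card with hM
  have hcore : (if 1 < r then 6 else if 2 < q then 5 else 4) * Scard ≤ M :=
    core q r hr hrq E hE2
  have hO6card : O6.card = 6 := by decide
  have hperz : ∀ z : ℤ × ℤ, (O6.filter (fun o => z + o ∉ E)).card + N' z = 6 := by
    intro z
    have h : (O6.filter (fun o => z + o ∈ E)).card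
        + (O6.filter (fun o => z + o ∉ E)).card = O6.card :=
      Finset.card_filter_add_card_filter_not (p := fun o => z + o ∈ E)
    rw [hO6card] at h
    have hN'z : N' z = (O6.filter (fun o => z + o ∈ E)).card := rfl
    omega
  have hswap : M = ∑ z ∈ E, (O6.filter (fun o => z + o ∉ E)).card := by
    rw [hM]
    simp_rw [Finset.card_filter]
    exact Finset.sum_comm
  have hMN : M + ∑ z ∈ E, N' z = 6 * E.card := by
    rw [hswap, ← Finset.sum_add_distrib]
    rw [Finset.sum_congr rfl (fun z _ => hperz z), Finset.sum_const, smul_eq_mul, mul_comm]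
  have hNle : ∀ z ∈ E, N' z ≤ 6 := fun z _ => by have := hperz z; omega
  -- boundary card
  have hbdcard : (bdry D).card = (E.filter (fun z => N' z < 6)).card := by
    have himg : E.filter (fun z => N' z < 6) = (bdry D).image ψ := by
      apply Finset.ext
      intro z
      simp only [Finset.mem_filter, Finset.mem_image, bdry]
      constructor
      · rintro ⟨hzE, hN6⟩
        have hpD : A + Phi0 z ∈ D := (hmemE z).mp hzE
        refine ⟨A + Phi0 z, ⟨hpD, ?_⟩, hAinj _ _ (hψeq _ hpD)⟩
        rw [hNcount z]; exact hN6
      · rintro ⟨p, ⟨hp1, hp2⟩, rfl⟩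
        refine ⟨hψD p hp1, ?_⟩
        rw [← hNcount (ψ p), hψeq p hp1]
        exact hp2
    rw [himg]
    exact (Finset.card_image_of_injOn
      (fun p hp p' hp' h => hinjD p (Finset.mem_of_mem_filter p hp)
        p' (Finset.mem_of_mem_filter p' hp') h)).symm
  have hbdM : (bdry D).card ≤ M := by
    rw [hbdcard, hswap]
    calc (E.filter (fun z => N' z < 6)).card
        = ∑ z ∈ E.filter (fun z => N' z < 6), 1 := by rw [Finset.card_eq_sum_ones]
      _ ≤ ∑ z ∈ E.filter (fun z => N' z < 6), (O6.filter (fun o => z + o ∉ E)).card := by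
          apply Finset.sum_le_sum
          intro z hz
          have h6 := (Finset.mem_filter.mp hz).2
          have := hperz z
          omega
      _ ≤ ∑ z ∈ E, (O6.filter (fun o => z + o ∉ E)).card :=
          Finset.sum_le_sum_of_subset (Finset.filter_subset _ _)
  -- final real arithmetic
  rw [hV]
  have hc1 : (M : ℝ) + ∑ z ∈ E, (N' z : ℝ) = 6 * (D.card : ℝ) := by
    have := hMN
    rw [hcardE] at this
    exact_mod_cast this
  have hαcast : ((if 1 < r then (6:ℕ) else if 2 < q then 5 else 4) : ℝ) = αR := by
    rw [hαR]; split_ifs <;> norm_num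
  have h1 : αR * (Scard : ℝ) ≤ (M : ℝ) := by
    rw [← hαcast]
    exact_mod_cast hcore
  have h2 : ((bdry D).card : ℝ) ≤ (M : ℝ) := by exact_mod_cast hbdM
  have hSle : (Scard : ℝ) ≤ (M : ℝ) / αR := (le_div_iff₀ hα0).mpr (by linarith)
  have h3 : cS * (Scard : ℝ) ≤ cS * ((M : ℝ) / αR) :=
    mul_le_mul_of_nonneg_left hSle (le_of_lt hcS)
  have h4 : Δ * ((bdry D).card : ℝ) ≤ Δ * (M : ℝ) :=
    mul_le_mul_of_nonneg_left h2 (le_of_lt hΔpos2)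
  have hid : Δ * (M : ℝ) = cF * (M : ℝ) - cS * ((M : ℝ) / αR) := by
    rw [hΔdef]; field_simp
  have h5 : -cF * (∑ z ∈ E, (N' z : ℝ)) = -6 * cF * (D.card : ℝ) + cF * (M : ℝ) := by
    have hsum : (∑ z ∈ E, (N' z : ℝ)) = 6 * (D.card : ℝ) - (M : ℝ) := by linarith
    rw [hsum]; ring
  have key : Δ * ((bdry D).card : ℝ) ≤ cF * (M : ℝ) - cS * (Scard : ℝ) := by linarith
  rw [h5]
  linarith [key]
end
end

section
/- Under the dewetting condition, for a sequence of configurations D_n of n atoms the following are equivalent: (i) there exists C > 0 with #∂D_n ≤ C√n for all n; (ii) there exists C' > 0 with E_n(μ_{D_n}) := n^{−1/2}(V_n(D_n) + 6c_F·n) ≤ C' for all n. -/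
noncomputable section
open scoped Classical

namespace DW

lemma s3pos : (0:ℝ) < Real.sqrt 3 := Real.sqrt_pos.mpr (by norm_num)
lemma s3sq : Real.sqrt 3 ^ 2 = 3 := Real.sq_sqrt (by norm_num)

def dirsZ : Finset (ℤ × ℤ) := {(1,0),(-1,0),(0,1),(0,-1),(-1,1),(1,-1)}

def embD (v : ℤ × ℤ) : ℝ × ℝ := ((v.1 : ℝ) + (v.2 : ℝ)/2, (v.2 : ℝ) * (Real.sqrt 3/2))

def embL (eFS : ℝ) (k : ℤ × ℤ) : ℝ × ℝ :=
  ((k.1 : ℝ) + (k.2 : ℝ)/2, eFS + (k.2 : ℝ) * (Real.sqrt 3/2))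

def actZ (q r : ℕ) (m : ℤ) : Prop := (q:ℤ) ∣ m ∨ (q:ℤ) ∣ (m - (r:ℤ))

def degZ (K : Finset (ℤ × ℤ)) (k : ℤ × ℤ) : ℕ := (dirsZ.filter (fun d => k + d ∈ K)).card

lemma embD_inj : Function.Injective embD := by
  rintro ⟨a,b⟩ ⟨a',b'⟩ h
  simp only [embD, Prod.mk.injEq] at h
  have hne : Real.sqrt 3/2 ≠ 0 := by positivity
  have hb : (b:ℝ) = (b':ℝ) := mul_right_cancel₀ hne h.2
  have hb' : b = b' := by exact_mod_cast hb
  have ha : (a:ℝ) = (a':ℝ) := by have h1 := h.1; rw [hb] at h1; linarith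
  have ha' : a = a' := by exact_mod_cast ha
  simp [ha', hb']

lemma embL_inj (eFS : ℝ) : Function.Injective (embL eFS) := by
  intro k k' h
  apply embD_inj
  simp only [embL, Prod.mk.injEq] at h
  simp only [embD, Prod.mk.injEq]
  exact ⟨h.1, by linarith [h.2]⟩

lemma embL_add (eFS : ℝ) (k v : ℤ × ℤ) : embL eFS (k + v) = embL eFS k + embD v := by
  simp only [embL, embD, Prod.mk_add_mk, Prod.fst_add, Prod.snd_add, Prod.mk.injEq]
  constructor <;> push_cast <;> ring

lemma embL_spec (eFS : ℝ) (k1 : ℤ) (k2 : ℕ) :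
    xF0 eFS + (k1:ℝ) • t1 + (k2:ℝ) • t2 = embL eFS (k1, (k2:ℤ)) := by
  simp only [xF0, t1, t2, embL, Prod.smul_mk, smul_eq_mul, Prod.mk_add_mk, Prod.mk.injEq]
  constructor <;> push_cast <;> ring

lemma mem_LF_iff (eFS : ℝ) (p : ℝ × ℝ) :
    p ∈ LF (xF0 eFS) ↔ ∃ k : ℤ × ℤ, 0 ≤ k.2 ∧ embL eFS k = p := by
  constructor
  · rintro ⟨k1, k2, rfl⟩
    exact ⟨(k1, (k2:ℤ)), by simp, (embL_spec eFS k1 k2).symm⟩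
  · rintro ⟨k, hk, rfl⟩
    refine ⟨k.1, k.2.toNat, ?_⟩
    rw [embL_spec]
    congr 1
    simp [Int.toNat_of_nonneg hk]

lemma dirs_eq : dirs = dirsZ.image embD := by
  have e1 : embD (1,0) = t1 := by norm_num [embD, t1, Prod.ext_iff]
  have e2 : embD (-1,0) = -t1 := by norm_num [embD, t1, Prod.ext_iff]
  have e3 : embD (0,1) = t2 := by norm_num [embD, t2, Prod.ext_iff]
  have e4 : embD (0,-1) = -t2 := by norm_num [embD, t2, Prod.ext_iff]
  have e5 : embD (-1,1) = t2 - t1 := by norm_num [embD, t1, t2, Prod.ext_iff]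
  have e6 : embD (1,-1) = t1 - t2 := by norm_num [embD, t1, t2, Prod.ext_iff]
  rw [dirs, dirsZ]
  simp [Finset.image_insert, e1, e2, e3, e4, e5, e6]

lemma quad_iff (A B : ℤ) : A^2 + A*B + B^2 = 1 ↔ (A,B) ∈ dirsZ := by
  constructor
  · intro h
    have h4 : (2*A+B)^2 + 3*B^2 = 4 := by linear_combination 4*h
    have hb1 : -1 ≤ B := by nlinarith [sq_nonneg (2*A+B)]
    have hb2 : B ≤ 1 := by nlinarith [sq_nonneg (2*A+B)]
    have ha1 : -1 ≤ A := by nlinarith [sq_nonneg (A+B), sq_nonneg B, sq_nonneg (A-1), sq_nonneg (A+1)]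
    have ha2 : A ≤ 1 := by nlinarith [sq_nonneg (A+B), sq_nonneg B, sq_nonneg (A-1), sq_nonneg (A+1)]
    interval_cases A <;> interval_cases B <;> simp_all [dirsZ] <;> omega
  · intro h
    simp only [dirsZ, Finset.mem_insert, Finset.mem_singleton, Prod.mk.injEq] at h
    rcases h with ⟨rfl, rfl⟩|⟨rfl, rfl⟩|⟨rfl, rfl⟩|⟨rfl, rfl⟩|⟨rfl, rfl⟩|⟨rfl, rfl⟩ <;> decide

lemma edist_embL (eFS : ℝ) (k k' : ℤ × ℤ) :
    edist2 (embL eFS k) (embL eFS k') = 1 ↔ k' - k ∈ dirsZ := by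
  have hcast : ((embL eFS k).1 - (embL eFS k').1) ^ 2 + ((embL eFS k).2 - (embL eFS k').2) ^ 2
      = (((k'.1 - k.1)^2 + (k'.1 - k.1)*(k'.2 - k.2) + (k'.2 - k.2)^2 : ℤ) : ℝ) := by
    simp only [embL]
    push_cast
    linear_combination (((k.2:ℝ) - (k'.2:ℝ))^2/4) * s3sq
  have hmem : k' - k = (k'.1 - k.1, k'.2 - k.2) := rfl
  rw [edist2, hcast, Real.sqrt_eq_one, hmem, ← quad_iff]
  exact_mod_cast Iff.rfl

lemma hasSub_iff (q r : ℕ) (eFS : ℝ) (k : ℤ × ℤ) :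
    hasSub q r eFS (embL eFS k) ↔ (k.2 = 0 ∧ actZ q r k.1) := by
  constructor
  · rintro ⟨m, hm, heq⟩
    simp only [embL, Prod.mk.injEq] at heq
    have h2 : (k.2:ℝ) * (Real.sqrt 3/2) = 0 := by linarith [heq.2]
    have h2' : (k.2:ℝ) = 0 := by
      rcases mul_eq_zero.1 h2 with h | h
      · exact h
      · exact absurd h (by positivity)
    have hk2 : k.2 = 0 := by exact_mod_cast h2'
    have hk1 : (k.1:ℝ) = (m:ℝ) := by rw [h2'] at heq; simpa using heq.1
    have hk1' : k.1 = m := by exact_mod_cast hk1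
    exact ⟨hk2, by rw [actZ, hk1']; exact hm⟩
  · rintro ⟨h2, hact⟩
    refine ⟨k.1, hact, ?_⟩
    simp only [embL, h2, Prod.mk.injEq]
    norm_num

lemma setup (q r : ℕ) (eFS cF cS : ℝ) (D : Finset (ℝ × ℝ))
    (hD : ↑D ⊆ LF (xF0 eFS)) :
    ∃ K : Finset (ℤ × ℤ), (∀ k ∈ K, 0 ≤ k.2) ∧ K.card = D.card ∧
      (bdry D).card = (K.filter (fun k => degZ K k < 6)).card ∧
      Vtot cF (v1sub q r eFS cS) D + 6 * cF * D.card
        = cF * (∑ k ∈ K, ((6:ℝ) - (degZ K k : ℝ)))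
          - cS * ((K.filter (fun k => k.2 = 0 ∧ actZ q r k.1)).card : ℝ) := by
  classical
  have hch : ∀ x ∈ D, ∃ k : ℤ × ℤ, 0 ≤ k.2 ∧ embL eFS k = x := by
    intro x hx
    exact (mem_LF_iff eFS x).1 (hD hx)
  set f : ℝ × ℝ → ℤ × ℤ := fun x =>
    if h : ∃ k : ℤ × ℤ, 0 ≤ k.2 ∧ embL eFS k = x then h.choose else 0 with hf
  have hfs : ∀ x ∈ D, 0 ≤ (f x).2 ∧ embL eFS (f x) = x := by
    intro x hx
    rw [hf]
    simp only [dif_pos (hch x hx)]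
    exact (hch x hx).choose_spec
  set K : Finset (ℤ × ℤ) := D.image f with hK
  have hKD : K.image (embL eFS) = D := by
    rw [hK, Finset.image_image]
    exact (Finset.image_congr (g := id) (fun x hx => (hfs x hx).2)).trans Finset.image_id
  have hmemK : ∀ v : ℤ × ℤ, v ∈ K ↔ embL eFS v ∈ D := by
    intro v
    constructor
    · intro hv; rw [← hKD]; exact Finset.mem_image_of_mem _ hv
    · intro hv
      rw [← hKD] at hv
      obtain ⟨k, hk, hkv⟩ := Finset.mem_image.1 hv
      rwa [embL_inj eFS hkv] at hk
  have hK0 : ∀ k ∈ K, 0 ≤ k.2 := by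
    intro k hk
    rw [hK] at hk
    obtain ⟨x, hx, rfl⟩ := Finset.mem_image.1 hk
    exact (hfs x hx).1
  have hcardK : K.card = D.card := by
    rw [← hKD, Finset.card_image_of_injective _ (embL_inj eFS)]
  -- degree transfer
  have hdegt : ∀ k : ℤ × ℤ, (dirs.filter (fun d => embL eFS k + d ∈ D)).card = degZ K k := by
    intro k
    rw [dirs_eq, Finset.filter_image, Finset.card_image_of_injective _ embD_inj]
    unfold degZ
    congr 1
    apply Finset.filter_congr
    intro d _
    rw [← embL_add]
    exact (hmemK (k + d)).symm
  -- sums over D as sums over K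
  have hsumD : ∀ (g : ℝ × ℝ → ℝ), ∑ x ∈ D, g x = ∑ k ∈ K, g (embL eFS k) := by
    intro g
    rw [← hKD, Finset.sum_image (fun a _ b _ h => embL_inj eFS h)]
  -- boundary transfer
  have hbd : (bdry D).card = (K.filter (fun k => degZ K k < 6)).card := by
    unfold bdry
    rw [← hKD, Finset.filter_image, Finset.card_image_of_injective _ (embL_inj eFS)]
    congr 1
    apply Finset.filter_congr
    intro k _
    simp only [hKD]
    rw [hdegt k]
  -- inner sum
  have hinner : ∀ k ∈ K, ∑ y ∈ D.erase (embL eFS k), vFF cF (edist2 (embL eFS k) y)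
      = -cF * (degZ K k : ℝ) := by
    intro k hk
    have hre : ∀ y, vFF cF (edist2 (embL eFS k) y)
        = if edist2 (embL eFS k) y = 1 then -cF else 0 := fun y => rfl
    rw [Finset.sum_congr rfl (fun y _ => hre y), ← Finset.sum_filter, Finset.sum_const,
      nsmul_eq_mul]
    have hcard : ((D.erase (embL eFS k)).filter
        (fun y => edist2 (embL eFS k) y = 1)).card = degZ K k := by
      unfold degZ
      symm
      apply Finset.card_bij (fun d _ => embL eFS k + embD d)
      · intro d hd
        simp only [Finset.mem_filter] at hd ⊢
        obtain ⟨hd1, hd2⟩ := hd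
        rw [← embL_add]
        have hd0 : d ≠ 0 := by
          intro h0; rw [h0] at hd1; revert hd1; decide
        refine ⟨Finset.mem_erase.2 ⟨?_, (hmemK (k + d)).1 hd2⟩, ?_⟩
        · intro hcontra
          exact hd0 (by simpa using embL_inj eFS hcontra)
        · rw [edist_embL]
          simpa using hd1
      · intro d1 h1 d2 h2 heq
        exact embD_inj (add_left_cancel heq)
      · intro y hy
        simp only [Finset.mem_filter, Finset.mem_erase] at hy
        obtain ⟨⟨hne, hyD⟩, hdist⟩ := hy
        obtain ⟨k', hk', rfl⟩ : ∃ k' ∈ K, embL eFS k' = y := by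
          rw [← hKD] at hyD
          simpa [Finset.mem_image] using hyD
        have hd : k' - k ∈ dirsZ := (edist_embL eFS k k').1 hdist
        refine ⟨k' - k, Finset.mem_filter.2 ⟨hd, by simpa using hk'⟩, ?_⟩
        rw [← embL_add]
        congr 1
        ring
    rw [hcard]
    ring
  -- v1 sum
  have hv1 : ∑ x ∈ D, v1sub q r eFS cS x
      = -cS * ((K.filter (fun k => k.2 = 0 ∧ actZ q r k.1)).card : ℝ) := by
    rw [hsumD]
    have hre : ∀ k ∈ K, v1sub q r eFS cS (embL eFS k)
        = if (k.2 = 0 ∧ actZ q r k.1) then -cS else 0 := by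
      intro k _
      unfold v1sub
      exact if_congr (hasSub_iff q r eFS k) rfl rfl
    rw [Finset.sum_congr rfl hre, ← Finset.sum_filter, Finset.sum_const, nsmul_eq_mul]
    ring
  refine ⟨K, hK0, hcardK, hbd, ?_⟩
  unfold Vtot
  rw [hsumD (fun x => ∑ y ∈ D.erase x, vFF cF (edist2 x y))]
  rw [Finset.sum_congr rfl hinner, hv1]
  have hsub6 : ∑ k ∈ K, ((6:ℝ) - (degZ K k : ℝ))
      = 6 * (K.card : ℝ) - ∑ k ∈ K, (degZ K k : ℝ) := by
    rw [Finset.sum_sub_distrib, Finset.sum_const, nsmul_eq_mul]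
    ring
  rw [hsub6, ← hcardK]
  rw [Finset.sum_congr rfl (fun k _ => by ring : ∀ k ∈ K, -cF * (degZ K k : ℝ) = -(cF * (degZ K k : ℝ)))]
  rw [Finset.sum_neg_distrib, ← Finset.mul_sum]
  ring


lemma deg_le_six (K : Finset (ℤ × ℤ)) (k : ℤ × ℤ) : degZ K k ≤ 6 :=
  le_trans (Finset.card_filter_le _ _) (by decide)

lemma count_bound (K : Finset (ℤ × ℤ)) (hK : ∀ k ∈ K, 0 ≤ k.2) :
    4 * (K.filter (fun k => k.2 = 0)).card
      + 2 * (K.filter (fun k => k.2 = 0 ∧ k + (-1,0) ∉ K)).card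
      ≤ ∑ k ∈ K, (6 - degZ K k) := by
  classical
  set N := K.card with hN
  set n0 := (K.filter (fun k => k.2 = 0)).card with hn0
  set c0 := (K.filter (fun k => k.2 = 0 ∧ k + (-1,0) ∉ K)).card with hc0
  have hd6 : ∀ k, degZ K k ≤ 6 := deg_le_six K
  -- total sum identity
  have hsum : ∑ k ∈ K, (6 - degZ K k) + ∑ k ∈ K, degZ K k = 6 * N := by
    rw [← Finset.sum_add_distrib]
    rw [Finset.sum_congr rfl (fun k _ => by have := hd6 k; omega :
      ∀ k ∈ K, (6 - degZ K k) + degZ K k = 6)]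
    simp [hN, mul_comm]
  -- swap
  have hswap : ∑ k ∈ K, degZ K k = ∑ d ∈ dirsZ, (K.filter (fun k => k + d ∈ K)).card := by
    unfold degZ
    simp only [Finset.card_filter]
    rw [Finset.sum_comm]
  -- shift invariance
  have hshift : ∀ d : ℤ × ℤ, (K.filter (fun k => k + d ∈ K)).card
      = (K.filter (fun k => k + (-d) ∈ K)).card := by
    intro d
    apply Finset.card_nbij' (i := fun k => k + d) (j := fun k => k + (-d))
    · intro a ha
      simp only [Finset.coe_filter, Set.mem_setOf_eq, Finset.mem_filter] at ha ⊢
      exact ⟨ha.2, by simpa using ha.1⟩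
    · intro a ha
      simp only [Finset.coe_filter, Set.mem_setOf_eq, Finset.mem_filter] at ha ⊢
      exact ⟨ha.2, by simpa using ha.1⟩
    · intro a _; simp
    · intro a _; simp
  -- down bounds
  have hdown : ∀ a : ℤ, (K.filter (fun k => k + (a,-1) ∈ K)).card + n0 ≤ N := by
    intro a
    have hsubset : K.filter (fun k => k + (a,-1) ∈ K) ⊆ K.filter (fun k => ¬ (k.2 = 0)) := by
      intro k hk
      simp only [Finset.mem_filter] at hk ⊢
      refine ⟨hk.1, ?_⟩
      have := hK _ hk.2
      simp only [Prod.snd_add] at this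
      omega
    have h1 : (K.filter (fun k => k + (a,-1) ∈ K)).card
        ≤ (K.filter (fun k => ¬ (k.2 = 0))).card := Finset.card_le_card hsubset
    have h2 : (K.filter (fun k => k.2 = 0)).card
        + (K.filter (fun k => ¬ (k.2 = 0))).card = N :=
      Finset.card_filter_add_card_filter_not _
    omega
  -- left bound
  have hleft : (K.filter (fun k => k + (-1,0) ∈ K)).card + c0 ≤ N := by
    have hsubset : K.filter (fun k => k + (-1,0) ∈ K)
        ⊆ K.filter (fun k => ¬ (k.2 = 0 ∧ k + (-1,0) ∉ K)) := by
      intro k hk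
      simp only [Finset.mem_filter] at hk ⊢
      exact ⟨hk.1, fun hcon => hcon.2 hk.2⟩
    have h1 := Finset.card_le_card hsubset
    have h2 : (K.filter (fun k => k.2 = 0 ∧ k + (-1,0) ∉ K)).card
        + (K.filter (fun k => ¬ (k.2 = 0 ∧ k + (-1,0) ∉ K))).card = N :=
      Finset.card_filter_add_card_filter_not _
    omega
  -- expand the 6 directions
  have hexp : ∑ d ∈ dirsZ, (K.filter (fun k => k + d ∈ K)).card
      = (K.filter (fun k => k + ((1:ℤ),(0:ℤ)) ∈ K)).card
      + (K.filter (fun k => k + ((-1:ℤ),(0:ℤ)) ∈ K)).card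
      + (K.filter (fun k => k + ((0:ℤ),(1:ℤ)) ∈ K)).card
      + (K.filter (fun k => k + ((0:ℤ),(-1:ℤ)) ∈ K)).card
      + (K.filter (fun k => k + ((-1:ℤ),(1:ℤ)) ∈ K)).card
      + (K.filter (fun k => k + ((1:ℤ),(-1:ℤ)) ∈ K)).card := by
    rw [show dirsZ = {((1:ℤ),(0:ℤ)),(-1,0),(0,1),(0,-1),(-1,1),(1,-1)} from rfl]
    rw [Finset.sum_insert (by decide), Finset.sum_insert (by decide),
      Finset.sum_insert (by decide), Finset.sum_insert (by decide),
      Finset.sum_insert (by decide), Finset.sum_singleton]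
    ring
  have e10 : (K.filter (fun k => k + ((1:ℤ),(0:ℤ)) ∈ K)).card
      = (K.filter (fun k => k + ((-1:ℤ),(0:ℤ)) ∈ K)).card := by
    rw [hshift ((1:ℤ),(0:ℤ))]
    norm_num
  have e01 : (K.filter (fun k => k + ((0:ℤ),(1:ℤ)) ∈ K)).card
      = (K.filter (fun k => k + ((0:ℤ),(-1:ℤ)) ∈ K)).card := by
    rw [hshift ((0:ℤ),(1:ℤ))]
    norm_num
  have em11 : (K.filter (fun k => k + ((-1:ℤ),(1:ℤ)) ∈ K)).card
      = (K.filter (fun k => k + ((1:ℤ),(-1:ℤ)) ∈ K)).card := by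
    rw [hshift ((-1:ℤ),(1:ℤ))]
    norm_num
  have hd1 := hdown 0
  have hd2 := hdown 1
  have hle := hleft
  omega

def kap (q r : ℕ) : ℕ := if q = 2 then 4 else if r = 1 then 5 else 6

lemma kap_ge (q r : ℕ) : 4 ≤ kap q r := by
  unfold kap; split_ifs <;> omega

lemma no_adj (q r : ℕ) (hr : 2 ≤ r) (hrq : 2 * r ≤ q) (a : ℤ)
    (h1 : actZ q r a) (h2 : actZ q r (a - 1)) : False := by
  have hq : (2:ℤ) * (r:ℤ) ≤ (q:ℤ) := by exact_mod_cast hrq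
  have hr' : (2:ℤ) ≤ (r:ℤ) := by exact_mod_cast hr
  rcases h1 with h1 | h1 <;> rcases h2 with h2 | h2
  · have hd : (q:ℤ) ∣ 1 := by
      have := dvd_sub h1 h2
      have he : a - (a - 1) = 1 := by ring
      rwa [he] at this
    have := Int.le_of_dvd one_pos hd
    omega
  · have hd : (q:ℤ) ∣ ((r:ℤ) + 1) := by
      have := dvd_sub h1 h2
      have he : a - (a - 1 - (r:ℤ)) = (r:ℤ) + 1 := by ring
      rwa [he] at this
    have := Int.le_of_dvd (by omega) hd
    omega
  · have hd : (q:ℤ) ∣ ((r:ℤ) - 1) := by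
      have := dvd_sub h2 h1
      have he : a - 1 - (a - (r:ℤ)) = (r:ℤ) - 1 := by ring
      rwa [he] at this
    have := Int.le_of_dvd (by omega) hd
    omega
  · have hd : (q:ℤ) ∣ 1 := by
      have := dvd_sub h1 h2
      have he : a - (r:ℤ) - (a - 1 - (r:ℤ)) = 1 := by ring
      rwa [he] at this
    have := Int.le_of_dvd one_pos hd
    omega

lemma t0_left_inact (q : ℕ) (hq3 : 3 ≤ q) (a : ℤ) (h : (q:ℤ) ∣ a) : ¬ actZ q 1 (a - 1) := by
  rintro (h2 | h2)
  · have hd : (q:ℤ) ∣ 1 := by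
      have := dvd_sub h h2
      have he : a - (a - 1) = 1 := by ring
      rwa [he] at this
    have := Int.le_of_dvd one_pos hd
    omega
  · have hd : (q:ℤ) ∣ 2 := by
      have := dvd_sub h h2
      have he : a - (a - 1 - ((1:ℕ):ℤ)) = 2 := by push_cast; ring
      rwa [he] at this
    have := Int.le_of_dvd (by omega) hd
    omega

lemma add_left_inj' (c : ℤ × ℤ) : Function.Injective (fun k : ℤ × ℤ => k + c) :=
  fun a b h => by simpa using h

lemma row_bound (q r : ℕ) (hr : 1 ≤ r) (hrq : 2 * r ≤ q) (K : Finset (ℤ × ℤ)) :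
    kap q r * (K.filter (fun k => k.2 = 0 ∧ actZ q r k.1)).card
      ≤ 4 * (K.filter (fun k => k.2 = 0)).card
        + 2 * (K.filter (fun k => k.2 = 0 ∧ k + (-1,0) ∉ K)).card := by
  classical
  set n0 := (K.filter (fun k => k.2 = 0)).card with hn0
  set c0 := (K.filter (fun k => k.2 = 0 ∧ k + (-1,0) ∉ K)).card with hc0
  set Sset := K.filter (fun k => k.2 = 0 ∧ actZ q r k.1) with hSset
  -- generic facts
  have hrow : ∀ k : ℤ × ℤ, (k + (-1,0)).2 = k.2 := by intro k; simp
  have hfst : ∀ k : ℤ × ℤ, (k + (-1,0)).1 = k.1 - 1 := by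
    intro k; simp [Prod.fst_add]; ring
  have hSn0 : Sset.card + (K.filter (fun k => k.2 = 0 ∧ ¬ actZ q r k.1)).card = n0 := by
    have e0 : (K.filter (fun k => k.2 = 0)).filter (fun k => actZ q r k.1)
        = K.filter (fun k => k.2 = 0 ∧ actZ q r k.1) := Finset.filter_filter _ _ _
    have e1 : (K.filter (fun k => k.2 = 0)).filter (fun k => ¬ actZ q r k.1)
        = K.filter (fun k => k.2 = 0 ∧ ¬ actZ q r k.1) := Finset.filter_filter _ _ _
    have h := Finset.card_filter_add_card_filter_not
      (s := K.filter (fun k => k.2 = 0)) (p := fun k => actZ q r k.1)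
    rw [e0, e1] at h
    rw [hSset, hn0]
    exact h
  by_cases hq2 : q = 2
  · -- kappa = 4
    have hk : kap q r = 4 := by simp [kap, hq2]
    rw [hk]
    have hle : Sset.card ≤ n0 := by
      apply Finset.card_le_card
      intro k hk'
      rw [hSset] at hk'
      simp only [Finset.mem_filter] at hk' ⊢
      exact ⟨hk'.1, hk'.2.1⟩
    omega
  by_cases hr1 : r = 1
  · -- kappa = 5
    subst hr1
    have hq3 : 3 ≤ q := by omega
    have hk : kap q 1 = 5 := by simp [kap, hq2]
    rw [hk]
    set T0 := K.filter (fun k => k.2 = 0 ∧ (q:ℤ) ∣ k.1) with hT0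
    set T1 := K.filter (fun k => k.2 = 0 ∧ ¬ (q:ℤ) ∣ k.1 ∧ (q:ℤ) ∣ (k.1 - 1)) with hT1
    set Iset := K.filter (fun k => k.2 = 0 ∧ ¬ actZ q 1 k.1) with hI
    -- S = T0 + T1
    have hsplitS : Sset.card = T0.card + T1.card := by
      have h1 : (Sset.filter (fun k => (q:ℤ) ∣ k.1)).card
          + (Sset.filter (fun k => ¬ (q:ℤ) ∣ k.1)).card = Sset.card :=
        Finset.card_filter_add_card_filter_not _
      have e0 : Sset.filter (fun k => (q:ℤ) ∣ k.1) = T0 := by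
        rw [hSset, hT0, Finset.filter_filter]
        apply Finset.filter_congr
        intro k _
        constructor
        · rintro ⟨⟨h2, _⟩, hd⟩; exact ⟨h2, hd⟩
        · rintro ⟨h2, hd⟩; exact ⟨⟨h2, Or.inl hd⟩, hd⟩
      have e0c : (Sset.filter (fun k => (q:ℤ) ∣ k.1)).card = T0.card := by rw [e0]
      have e1 : Sset.filter (fun k => ¬ (q:ℤ) ∣ k.1) = T1 := by
        rw [hSset, hT1, Finset.filter_filter]
        apply Finset.filter_congr
        intro k _
        constructor
        · rintro ⟨⟨h2, hact⟩, hnd⟩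
          refine ⟨h2, hnd, ?_⟩
          rcases hact with h | h
          · exact absurd h hnd
          · simpa using h
        · rintro ⟨h2, hnd, hd⟩
          exact ⟨⟨h2, Or.inr (by simpa using hd)⟩, hnd⟩
      have e1c : (Sset.filter (fun k => ¬ (q:ℤ) ∣ k.1)).card = T1.card := by rw [e1]
      omega
    -- splits of T0, T1 by left neighbour
    have hsplitT0 : (T0.filter (fun k => k + (-1,0) ∈ K)).card
        + (T0.filter (fun k => ¬ (k + (-1,0) ∈ K))).card = T0.card :=
      Finset.card_filter_add_card_filter_not _
    have hsplitT1 : (T1.filter (fun k => k + (-1,0) ∈ K)).card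
        + (T1.filter (fun k => ¬ (k + (-1,0) ∈ K))).card = T1.card :=
      Finset.card_filter_add_card_filter_not _
    -- injection T0₂ → Iset
    have hinj0 : (T0.filter (fun k => k + (-1,0) ∈ K)).card ≤ Iset.card := by
      apply Finset.card_le_card_of_injOn (fun k => k + (-1,0))
      · intro k hk'
        simp only [hT0, Finset.coe_filter, Set.mem_setOf_eq, Finset.mem_filter] at hk'
        obtain ⟨⟨hkK, h2, hd⟩, hnb⟩ := hk'
        simp only [hI, Finset.coe_filter, Set.mem_setOf_eq, Finset.mem_filter]
        refine ⟨hnb, by rw [hrow]; exact h2, ?_⟩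
        rw [hfst]
        exact t0_left_inact q hq3 k.1 hd
      · exact fun a _ b _ h => add_left_inj' _ h
    -- injection T1₂ → T0
    have hinj1 : (T1.filter (fun k => k + (-1,0) ∈ K)).card ≤ T0.card := by
      apply Finset.card_le_card_of_injOn (fun k => k + (-1,0))
      · intro k hk'
        simp only [hT1, Finset.coe_filter, Set.mem_setOf_eq, Finset.mem_filter] at hk'
        obtain ⟨⟨hkK, h2, hnd, hd⟩, hnb⟩ := hk'
        simp only [hT0, Finset.coe_filter, Set.mem_setOf_eq, Finset.mem_filter]
        refine ⟨hnb, by rw [hrow]; exact h2, ?_⟩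
        rw [hfst]
        simpa using hd
      · exact fun a _ b _ h => add_left_inj' _ h
    -- endpoints: T0₁ ∪ T1₁ ⊆ c0-set, disjoint
    have hend : (T0.filter (fun k => ¬ (k + (-1,0) ∈ K))).card
        + (T1.filter (fun k => ¬ (k + (-1,0) ∈ K))).card ≤ c0 := by
      have hdisj : Disjoint (T0.filter (fun k => ¬ (k + (-1,0) ∈ K)))
          (T1.filter (fun k => ¬ (k + (-1,0) ∈ K))) := by
        rw [Finset.disjoint_left]
        intro k hk0 hk1
        simp only [hT0, hT1, Finset.mem_filter] at hk0 hk1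
        exact hk1.1.2.2.1 hk0.1.2.2
      calc (T0.filter (fun k => ¬ (k + (-1,0) ∈ K))).card
            + (T1.filter (fun k => ¬ (k + (-1,0) ∈ K))).card
          = ((T0.filter (fun k => ¬ (k + (-1,0) ∈ K)))
            ∪ (T1.filter (fun k => ¬ (k + (-1,0) ∈ K)))).card :=
            (Finset.card_union_of_disjoint hdisj).symm
        _ ≤ c0 := by
            apply Finset.card_le_card
            intro k hk'
            simp only [Finset.mem_union, hT0, hT1, Finset.mem_filter] at hk'
            simp only [hc0, Finset.mem_filter]
            rcases hk' with ⟨⟨hkK, h2, _⟩, hnb⟩ | ⟨⟨hkK, h2, _⟩, hnb⟩ <;> exact ⟨hkK, h2, hnb⟩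
    have hIn0 : Sset.card + Iset.card = n0 := hSn0
    omega
  · -- kappa = 6, r ≥ 2
    have hr2 : 2 ≤ r := by omega
    have hk : kap q r = 6 := by simp [kap, hq2, hr1]
    rw [hk]
    set Iset := K.filter (fun k => k.2 = 0 ∧ ¬ actZ q r k.1) with hI
    have hsplitA : (Sset.filter (fun k => k + (-1,0) ∈ K)).card
        + (Sset.filter (fun k => ¬ (k + (-1,0) ∈ K))).card = Sset.card :=
      Finset.card_filter_add_card_filter_not _
    have hinj : (Sset.filter (fun k => k + (-1,0) ∈ K)).card ≤ Iset.card := by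
      apply Finset.card_le_card_of_injOn (fun k => k + (-1,0))
      · intro k hk'
        simp only [hSset, Finset.coe_filter, Set.mem_setOf_eq, Finset.mem_filter] at hk'
        obtain ⟨⟨hkK, h2, hact⟩, hnb⟩ := hk'
        simp only [hI, Finset.coe_filter, Set.mem_setOf_eq, Finset.mem_filter]
        refine ⟨hnb, by rw [hrow]; exact h2, ?_⟩
        rw [hfst]
        intro hcon
        exact no_adj q r hr2 hrq k.1 hact hcon
      · exact fun a _ b _ h => add_left_inj' _ h
    have hend : (Sset.filter (fun k => ¬ (k + (-1,0) ∈ K))).card ≤ c0 := by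
      rw [hc0]
      apply Finset.card_le_card
      intro k hk'
      simp only [hSset, Finset.mem_filter] at hk' ⊢
      obtain ⟨⟨hkK, h2, _⟩, hnb⟩ := hk'
      exact ⟨hkK, h2, hnb⟩
    omega


lemma upper (q r : ℕ) (eFS cF cS : ℝ) (hcF : 0 ≤ cF) (hcS : 0 ≤ cS)
    (D : Finset (ℝ × ℝ)) (hD : ↑D ⊆ LF (xF0 eFS)) :
    Vtot cF (v1sub q r eFS cS) D + 6 * cF * D.card ≤ 6 * cF * ((bdry D).card : ℝ) := by
  obtain ⟨K, hK0, hKc, hBc, hE⟩ := setup q r eFS cF cS D hD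
  rw [hE, hBc]
  have h1 : ∑ k ∈ K, ((6:ℝ) - (degZ K k : ℝ))
      ≤ ∑ k ∈ K, (if degZ K k < 6 then (6:ℝ) else 0) := by
    apply Finset.sum_le_sum
    intro k _
    by_cases h : degZ K k < 6
    · rw [if_pos h]
      have : (0:ℝ) ≤ (degZ K k : ℝ) := Nat.cast_nonneg _
      linarith
    · rw [if_neg h]
      have : (6:ℝ) ≤ (degZ K k : ℝ) := by exact_mod_cast Nat.le_of_not_lt h
      linarith
  have h2 : ∑ k ∈ K, (if degZ K k < 6 then (6:ℝ) else 0)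
      = 6 * ((K.filter (fun k => degZ K k < 6)).card : ℝ) := by
    rw [← Finset.sum_filter, Finset.sum_const, nsmul_eq_mul]
    ring
  have h3 : (0:ℝ) ≤ cS * ((K.filter (fun k => k.2 = 0 ∧ actZ q r k.1)).card : ℝ) := by
    positivity
  have h4 : cF * (∑ k ∈ K, ((6:ℝ) - (degZ K k : ℝ)))
      ≤ cF * (6 * ((K.filter (fun k => degZ K k < 6)).card : ℝ)) :=
    mul_le_mul_of_nonneg_left (h1.trans_eq h2) hcF
  linarith

lemma lower (q r : ℕ) (hr : 1 ≤ r) (hrq : 2 * r ≤ q) (eFS cF cS : ℝ)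
    (hcF : 0 < cF) (hcS : 0 < cS)
    (hdew : (1 < r → cS < 6 * cF) ∧ (r = 1 ∧ 2 < q → cS < 5 * cF) ∧
      (r = 1 ∧ q = 2 → cS < 4 * cF)) :
    ∃ Δ : ℝ, 0 < Δ ∧ ∀ D : Finset (ℝ × ℝ), ↑D ⊆ LF (xF0 eFS) →
      Δ * ((bdry D).card : ℝ) ≤ Vtot cF (v1sub q r eFS cS) D + 6 * cF * D.card := by
  have hκ4 := kap_ge q r
  have hκpos : (0:ℝ) < (kap q r : ℝ) := by exact_mod_cast (by omega : 0 < kap q r)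
  have hdewκ : cS < (kap q r : ℝ) * cF := by
    by_cases hq2 : q = 2
    · have hr1 : r = 1 := by omega
      have hd := hdew.2.2 ⟨hr1, hq2⟩
      have hk : kap q r = 4 := by simp [kap, hq2]
      rw [hk]
      push_cast
      linarith
    · by_cases hr1 : r = 1
      · have hq3 : 2 < q := by omega
        have hd := hdew.2.1 ⟨hr1, hq3⟩
        have hk : kap q r = 5 := by simp [kap, hq2, hr1]
        rw [hk]
        push_cast
        linarith
      · have hd := hdew.1 (by omega)
        have hk : kap q r = 6 := by simp [kap, hq2, hr1]
        rw [hk]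
        push_cast
        linarith
  refine ⟨cF - cS / (kap q r : ℝ), by rw [sub_pos, div_lt_iff₀ hκpos]; linarith, ?_⟩
  intro D hD
  obtain ⟨K, hK0, hKc, hBc, hE⟩ := setup q r eFS cF cS D hD
  rw [hE, hBc]
  have hMR : ∑ k ∈ K, ((6:ℝ) - (degZ K k : ℝ)) = ((∑ k ∈ K, (6 - degZ K k) : ℕ) : ℝ) := by
    rw [Nat.cast_sum]
    apply Finset.sum_congr rfl
    intro k _
    rw [Nat.cast_sub (deg_le_six K k)]
    norm_num
  have hB_le : (K.filter (fun k => degZ K k < 6)).card ≤ ∑ k ∈ K, (6 - degZ K k) := by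
    calc (K.filter (fun k => degZ K k < 6)).card
        = ∑ _k ∈ K.filter (fun k => degZ K k < 6), 1 := by rw [Finset.card_eq_sum_ones]
      _ ≤ ∑ k ∈ K.filter (fun k => degZ K k < 6), (6 - degZ K k) := by
          apply Finset.sum_le_sum
          intro k hk
          have := (Finset.mem_filter.1 hk).2
          omega
      _ ≤ ∑ k ∈ K, (6 - degZ K k) :=
          Finset.sum_le_sum_of_subset (Finset.filter_subset _ _)
  have hMS : kap q r * (K.filter (fun k => k.2 = 0 ∧ actZ q r k.1)).card
      ≤ ∑ k ∈ K, (6 - degZ K k) :=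
    le_trans (row_bound q r hr hrq K) (count_bound K hK0)
  rw [hMR]
  set MNR : ℝ := ((∑ k ∈ K, (6 - degZ K k) : ℕ) : ℝ) with hMNR
  set BR : ℝ := ((K.filter (fun k => degZ K k < 6)).card : ℝ) with hBR
  set SR : ℝ := ((K.filter (fun k => k.2 = 0 ∧ actZ q r k.1)).card : ℝ) with hSR
  have hBle : BR ≤ MNR := by rw [hBR, hMNR]; exact_mod_cast hB_le
  have hSle : (kap q r : ℝ) * SR ≤ MNR := by
    rw [hSR, hMNR]
    exact_mod_cast hMS
  have hSnn : (0:ℝ) ≤ SR := by rw [hSR]; positivity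
  have hc1 : (cS / (kap q r : ℝ)) * ((kap q r : ℝ) * SR) = cS * SR := by
    field_simp
  have hc2 : (cS / (kap q r : ℝ)) * ((kap q r : ℝ) * SR) ≤ (cS / (kap q r : ℝ)) * MNR :=
    mul_le_mul_of_nonneg_left hSle (by positivity)
  have hΔnn : (0:ℝ) ≤ cF - cS / (kap q r : ℝ) := by
    rw [sub_nonneg, div_le_iff₀ hκpos]
    nlinarith
  have hc3 : (cF - cS / (kap q r : ℝ)) * BR ≤ (cF - cS / (kap q r : ℝ)) * MNR :=
    mul_le_mul_of_nonneg_left hBle hΔnn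
  nlinarith [hc1, hc2, hc3]

end DW

/-- under the dewetting condition, for a sequence of `n`-atom
configurations the surface-order bound on the boundary cardinality is equivalent to
the uniform bound on the rescaled energies
`E_n(μ_{D_n}) = n^{-1/2}(V_n(D_n) + 6cF·n)`. -/
theorem boundary_iff_energy_bound (q r : ℕ) (hr : 1 ≤ r) (hrq : 2 * r ≤ q)
    (eFS cF cS : ℝ) (heFS : 0 < eFS) (hcF : 0 < cF) (hcS : 0 < cS)
    (hdew : (1 < r → cS < 6 * cF) ∧ (r = 1 ∧ 2 < q → cS < 5 * cF) ∧
      (r = 1 ∧ q = 2 → cS < 4 * cF))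
    (D : ℕ → Finset (ℝ × ℝ)) (hcard : ∀ n, (D n).card = n)
    (hsub : ∀ n, ↑(D n) ⊆ LF (xF0 eFS)) :
    (∃ C > 0, ∀ n : ℕ, ((bdry (D n)).card : ℝ) ≤ C * Real.sqrt n) ↔
      (∃ C' > 0, ∀ n : ℕ,
        (Vtot cF (v1sub q r eFS cS) (D n) + 6 * cF * n) / Real.sqrt n ≤ C') := by
  constructor
  · rintro ⟨C, hC, hB⟩
    refine ⟨6 * cF * C + 1, by positivity, fun n => ?_⟩
    have hup := DW.upper q r eFS cF cS (le_of_lt hcF) (le_of_lt hcS) (D n) (hsub n)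
    rw [hcard n] at hup
    rcases Nat.eq_zero_or_pos n with h0 | hpos
    · subst h0
      norm_num [Real.sqrt_zero]
      positivity
    · have hsq : 0 < Real.sqrt n := Real.sqrt_pos.mpr (by exact_mod_cast hpos)
      rw [div_le_iff₀ hsq]
      have h1 : (6:ℝ) * cF * ((bdry (D n)).card : ℝ) ≤ 6 * cF * (C * Real.sqrt n) :=
        mul_le_mul_of_nonneg_left (hB n) (by positivity)
      nlinarith [hsq.le]
  · rintro ⟨C', hC', hE⟩
    obtain ⟨Δ, hΔ, hlow⟩ := DW.lower q r hr hrq eFS cF cS hcF hcS hdew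
    refine ⟨C' / Δ + 1, by positivity, fun n => ?_⟩
    rcases Nat.eq_zero_or_pos n with h0 | hpos
    · subst h0
      have hD0 : D 0 = ∅ := Finset.card_eq_zero.1 (hcard 0)
      have : bdry (D 0) = ∅ := by
        rw [hD0]
        rfl
      rw [this]
      simp
    · have hsq : 0 < Real.sqrt n := Real.sqrt_pos.mpr (by exact_mod_cast hpos)
      have hEn := hE n
      rw [div_le_iff₀ hsq] at hEn
      have hlo := hlow (D n) (hsub n)
      rw [hcard n] at hlo
      have h1 : Δ * ((bdry (D n)).card : ℝ) ≤ C' * Real.sqrt n := le_trans hlo hEn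
      have h2 : ((bdry (D n)).card : ℝ) ≤ (C' / Δ) * Real.sqrt n := by
        rw [div_mul_eq_mul_div, le_div_iff₀ hΔ]
        nlinarith
      nlinarith [hsq.le]
end
end

section
/- If the model M_Λ(x_F, z) with z = (p,q,0) is in class C₁ (every site of ∂L_FS has two substrate neighbors and ∂L_FS = {x_F + (kq,0) : k ∈ ℤ}), then for every configuration D_n the energy in M_Λ(x_F,z) equals the energy of the translated configuration D_n − x_F + x_F⁰ in the model M⁰_{Λ'}(1,q) with Λ' = (e_FS, c_F, 2c_S); i.e., the two models are equivalent. -/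
noncomputable section
open scoped Classical

/-- The substrate row: atoms `(off + k·eS, 0)`, `k ∈ ℤ`. -/
def subRow (eS off : ℝ) : Set (ℝ × ℝ) := {s | ∃ k : ℤ, s = (off + (k : ℝ) * eS, 0)}

/-- The film bottom row: sites `(xF1 + k, eFS)`, `k ∈ ℤ`. -/
def filmRow (xF1 eFS : ℝ) : Set (ℝ × ℝ) := {x | ∃ k : ℤ, x = (xF1 + (k : ℝ), eFS)}

/-- Energy of a configuration in a model with substrate wall `wall` and bond strength
`cS'`: each atom gains `-cS'` for each substrate atom at distance exactly `eFS`. -/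
def Vmod (cF eFS : ℝ) (wall : Set (ℝ × ℝ)) (cS' : ℝ) (D : Finset (ℝ × ℝ)) : ℝ :=
  (∑ x ∈ D, ∑ y ∈ D.erase x, vFF cF (edist2 x y))
    + ∑ x ∈ D, (-cS' * (({s ∈ wall | edist2 x s = eFS}).ncard : ℝ))


lemma sqrt_eq_pos {A e : ℝ} (hA : 0 ≤ A) (he : 0 ≤ e) :
    Real.sqrt A = e ↔ A = e ^ 2 := by
  constructor
  · intro h; rw [← h, Real.sq_sqrt hA]
  · intro h; rw [h, Real.sqrt_sq he]

lemma edist2_translate (a b c : ℝ × ℝ) : edist2 (a + c) (b + c) = edist2 a b := by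
  simp only [edist2, Prod.fst_add, Prod.snd_add]
  ring_nf

set_option maxHeartbeats 1000000

/-- if the model `M_Λ(x_F, (p,q,0))` is in class `C₁` (the film sites
with a substrate neighbor are exactly `{x_F + (kq,0) : k ∈ ℤ}` and each of them has two
substrate neighbors), then for every configuration `D ⊆ LF x_F` its energy equals the
energy of the translated configuration `D - x_F + x_F⁰` in the model `M⁰_{Λ'}(1,q)`
with `Λ' = (eFS, cF, 2cS)` (wall `{(kq,0) : k ∈ ℤ}`, strength `2cS`): the two models
are equivalent. -/
theorem class_C1_equivalence (p q : ℕ) (hp : 0 < p) (hq : 0 < q)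
    (hco : Nat.Coprime p q) (off : ℝ) (xF : ℝ × ℝ) (eFS cF cS : ℝ)
    (heFS : 0 < eFS) (hcF : 0 < cF) (hcS : 0 < cS) (hxF2 : 0 < xF.2)
    (hdist : ∀ x ∈ LF xF, ∀ s ∈ subRow ((q : ℝ) / p) off, eFS ≤ edist2 x s)
    (hclassFS : ∀ x ∈ LF xF,
      ((∃ s ∈ subRow ((q : ℝ) / p) off, edist2 x s = eFS) ↔
        ∃ k : ℤ, x = xF + ((k : ℝ) * q, 0)))
    (htwo : ∀ k : ℤ,
      ({s ∈ subRow ((q : ℝ) / p) off |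
          edist2 (xF + ((k : ℝ) * q, 0)) s = eFS}).ncard = 2) :
    ∀ D : Finset (ℝ × ℝ), ↑D ⊆ LF xF →
      Vmod cF eFS (subRow ((q : ℝ) / p) off) cS D
        = Vmod cF eFS (subRow (q : ℝ) 0) (2 * cS)
            (D.image (fun y => y - xF + xF0 eFS)) := by
  intro D hD
  set c : ℝ × ℝ := xF0 eFS with hc
  set f : ℝ × ℝ → ℝ × ℝ := fun y => y - xF + xF0 eFS with hfdef
  have hfeq : ∀ y, f y = y + (xF0 eFS - xF) := by
    intro y; simp only [hfdef]; abel
  have hfinj : Function.Injective f := by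
    intro a b h
    rw [hfeq, hfeq] at h
    exact add_right_cancel h
  have hqR : (0:ℝ) < (q:ℝ) := by exact_mod_cast hq
  -- film-film part
  have hFF : ∑ x ∈ D.image f, ∑ y ∈ (D.image f).erase x, vFF cF (edist2 x y)
      = ∑ x ∈ D, ∑ y ∈ D.erase x, vFF cF (edist2 x y) := by
    rw [Finset.sum_image (fun a _ b _ h => hfinj h)]
    refine Finset.sum_congr rfl fun x hx => ?_
    rw [← Finset.image_erase hfinj, Finset.sum_image (fun a _ b _ h => hfinj h)]
    refine Finset.sum_congr rfl fun y hy => ?_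
    rw [hfeq x, hfeq y, edist2_translate]
  -- substrate part, pointwise
  have hsub : ∀ x ∈ D,
      -cS * (({s ∈ subRow ((q : ℝ) / p) off | edist2 x s = eFS}).ncard : ℝ)
      = -(2 * cS) * (({s ∈ subRow (q : ℝ) 0 | edist2 (f x) s = eFS}).ncard : ℝ) := by
    intro x hx
    have hxL : x ∈ LF xF := hD hx
    obtain ⟨k1, k2, hxrep⟩ := hxL
    have hfx : f x = ((k1:ℝ) + (k2:ℝ) / 2, (k2:ℝ) * (Real.sqrt 3 / 2) + eFS) := by
      simp only [hfdef, hxrep, xF0, t1, t2, Prod.smul_mk, smul_eq_mul]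
      apply Prod.ext <;> simp <;> ring
    have hs3 : (0:ℝ) ≤ Real.sqrt 3 := Real.sqrt_nonneg 3
    have hk2 : (0:ℝ) ≤ (k2:ℝ) := Nat.cast_nonneg k2
    by_cases h : ∃ k : ℤ, x = xF + ((k : ℝ) * q, 0)
    · obtain ⟨k, hk⟩ := h
      -- left count is 2
      have h1 : ({s ∈ subRow ((q : ℝ) / p) off | edist2 x s = eFS}).ncard = 2 := by
        rw [hk]; exact htwo k
      -- right set is the singleton {(k*q, 0)}
      have hfx' : f x = ((k:ℝ) * q, eFS) := by
        simp only [hfdef, hk, xF0]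
        apply Prod.ext <;> simp
      have h2 : {s ∈ subRow (q : ℝ) 0 | edist2 (f x) s = eFS}
          = {(((k:ℝ) * q, 0) : ℝ × ℝ)} := by
        ext s
        simp only [Set.mem_sep_iff, subRow, Set.mem_setOf_eq, Set.mem_singleton_iff]
        constructor
        · rintro ⟨⟨m, rfl⟩, hdist⟩
          rw [hfx'] at hdist
          simp only [edist2] at hdist
          rw [sqrt_eq_pos (by positivity) heFS.le] at hdist
          have hm : ((k:ℝ) * q - (0 + (m:ℝ) * q)) ^ 2 = 0 := by nlinarith
          have hkm : (k:ℝ) * q = (m:ℝ) * q := by nlinarith [sq_nonneg ((k:ℝ)*q - (0 + (m:ℝ)*q))]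
          have hmk : (m:ℝ) = (k:ℝ) := (mul_right_cancel₀ (ne_of_gt hqR) hkm).symm
          rw [hmk]
          simp
        · rintro rfl
          refine ⟨⟨k, by simp⟩, ?_⟩
          rw [hfx']
          simp only [edist2]
          rw [sqrt_eq_pos (by positivity) heFS.le]
          ring
      rw [h1, h2, Set.ncard_singleton]
      norm_num; ring
    · -- left count is 0
      have h1 : {s ∈ subRow ((q : ℝ) / p) off | edist2 x s = eFS} = ∅ := by
        rw [Set.eq_empty_iff_forall_notMem]
        rintro s ⟨hs, hds⟩
        exact h (((hclassFS x (hD hx)).mp ⟨s, hs, hds⟩))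
      -- right count is 0
      have h2 : {s ∈ subRow (q : ℝ) 0 | edist2 (f x) s = eFS} = ∅ := by
        rw [Set.eq_empty_iff_forall_notMem]
        rintro s ⟨⟨m, rfl⟩, hds⟩
        rw [hfx] at hds
        simp only [edist2] at hds
        rw [sqrt_eq_pos (by positivity) heFS.le] at hds
        have h3pos : (0:ℝ) < Real.sqrt 3 := Real.sqrt_pos.mpr (by norm_num)
        have hy : (k2:ℝ) * (Real.sqrt 3 / 2) + eFS - 0 ≥ eFS := by nlinarith
        have hyle : (k2:ℝ) * (Real.sqrt 3 / 2) + eFS - 0 ≤ eFS := by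
          nlinarith [sq_nonneg ((k1:ℝ) + (k2:ℝ)/2 - (0 + (m:ℝ)*q))]
        have hyeq : (k2:ℝ) * (Real.sqrt 3 / 2) + eFS - 0 = eFS := le_antisymm hyle hy
        have h30 : Real.sqrt 3 / 2 > 0 := by positivity
        have hk20 : (k2:ℝ) = 0 := by
          have hz : (k2:ℝ) * (Real.sqrt 3 / 2) = 0 := by linarith
          rcases mul_eq_zero.mp hz with h' | h'
          · exact h'
          · exact absurd h' (ne_of_gt h30)
        rw [hyeq] at hds
        have hA2 : ((k1:ℝ) + (k2:ℝ)/2 - (0 + (m:ℝ)*q)) ^ 2 = 0 := by linarith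
        have hA0 := sq_eq_zero_iff.mp hA2
        have hx1 : (k1:ℝ) = (m:ℝ) * q := by
          rw [hk20] at hA0; linarith
        apply h
        refine ⟨m, ?_⟩
        rw [hxrep, hk20]
        simp only [t1, t2, Prod.smul_mk, smul_eq_mul]
        apply Prod.ext <;> simp [hx1]
      rw [h1, h2]
      simp
  -- combine
  simp only [Vmod]
  rw [hFF, Finset.sum_image (fun a _ b _ h => hfinj h)]
  congr 1
  exact Finset.sum_congr rfl hsub
end
end

section
/- The anisotropic surface tension Γ: S¹ → ℝ, defined on [0, π/3] by Γ(ν(φ)) = 2c_F(ν₂(φ) − ν₁(φ)/√3) for ν(φ) = (−sin φ, cos φ), extended π/3-periodically in φ and then 1-homogeneously to ℝ², is a convex function on ℝ², positive away from 0; in particular it is a Finsler norm, and Γ(±(0,1)) = 2c_F. -/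
open Real

noncomputable def ellAux (cF : ℝ) (j : ℕ) (x : ℝ × ℝ) : ℝ :=
  4 * cF / Real.sqrt 3 *
    (x.1 * (-Real.sin (π/6 + j * (π/3))) + x.2 * Real.cos (π/6 + j * (π/3)))

noncomputable def gAux (cF : ℝ) (x : ℝ × ℝ) : ℝ :=
  ((((ellAux cF 0 x ⊔ ellAux cF 1 x) ⊔ ellAux cF 2 x) ⊔ ellAux cF 3 x) ⊔ ellAux cF 4 x)
    ⊔ ellAux cF 5 x

lemma ellAux_convexOn (cF : ℝ) (j : ℕ) : ConvexOn ℝ Set.univ (ellAux cF j) := by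
  refine ⟨convex_univ, fun x _ y _ a b ha hb hab => ?_⟩
  simp only [ellAux, Prod.fst_add, Prod.snd_add, Prod.smul_fst, Prod.smul_snd, smul_eq_mul]
  apply le_of_eq; ring

lemma gAux_convexOn (cF : ℝ) : ConvexOn ℝ Set.univ (gAux cF) :=
  ((((((ellAux_convexOn cF 0).sup (ellAux_convexOn cF 1)).sup (ellAux_convexOn cF 2)).sup
    (ellAux_convexOn cF 3)).sup (ellAux_convexOn cF 4)).sup (ellAux_convexOn cF 5))

lemma gAux_smul (cF : ℝ) {r : ℝ} (hr : 0 ≤ r) (x : ℝ × ℝ) :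
    gAux cF (r • x) = r * gAux cF x := by
  have hell : ∀ j, ellAux cF j (r • x) = r * ellAux cF j x := by
    intro j
    simp only [ellAux, Prod.smul_fst, Prod.smul_snd, smul_eq_mul]; ring
  have hmax : ∀ a b : ℝ, r * a ⊔ r * b = r * (a ⊔ b) := fun a b =>
    (mul_max_of_nonneg a b hr).symm
  simp only [gAux, hell, hmax]

lemma cos_key {t : ℝ} (ht : -(π/6) ≤ t) (ht' : t ≤ π/6) (m : ℤ) :
    Real.cos (t + m * (π/3)) ≤ Real.cos t := by
  have hπ := Real.pi_pos
  obtain ⟨q, r, hr0, hr6, hm⟩ : ∃ q r : ℤ, 0 ≤ r ∧ r < 6 ∧ m = 6*q + r :=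
    ⟨m / 6, m % 6, Int.emod_nonneg m (by norm_num), Int.emod_lt_of_pos m (by norm_num),
      (Int.mul_ediv_add_emod m 6).symm⟩
  have hre : t + (m : ℝ) * (π/3) = (t + (r : ℝ) * (π/3)) + q * (2*π) := by
    rw [hm]; push_cast; ring
  rw [hre, Real.cos_add_int_mul_two_pi]
  have habs : Real.cos t = Real.cos |t| := (Real.cos_abs t).symm
  have habs' : |t| ≤ π/6 := abs_le.mpr ⟨ht, ht'⟩
  have habs0 : 0 ≤ |t| := abs_nonneg t
  interval_cases r
  · norm_num
  · push_cast
    rw [habs]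
    exact Real.cos_le_cos_of_nonneg_of_le_pi habs0 (by linarith) (by linarith)
  · push_cast
    rw [habs]
    exact Real.cos_le_cos_of_nonneg_of_le_pi habs0 (by linarith) (by linarith)
  · push_cast
    rw [show t + (3:ℝ) * (π/3) = t + π by ring, Real.cos_add_pi]
    have : 0 ≤ Real.cos t := Real.cos_nonneg_of_mem_Icc ⟨by linarith, by linarith⟩
    linarith
  · push_cast
    rw [show t + (4:ℝ) * (π/3) = (t - 2*π/3) + 2*π by ring, Real.cos_add_two_pi,
      ← neg_sub, Real.cos_neg, habs]
    exact Real.cos_le_cos_of_nonneg_of_le_pi habs0 (by linarith) (by linarith)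
  · push_cast
    rw [show t + (5:ℝ) * (π/3) = (t - π/3) + 2*π by ring, Real.cos_add_two_pi,
      ← neg_sub, Real.cos_neg, habs]
    exact Real.cos_le_cos_of_nonneg_of_le_pi habs0 (by linarith) (by linarith)

lemma ellAux_nu (cF : ℝ) (j : ℕ) (θ : ℝ) :
    ellAux cF j (-Real.sin θ, Real.cos θ)
      = 4 * cF / Real.sqrt 3 * Real.cos (θ - (π/6 + j * (π/3))) := by
  simp only [ellAux]
  rw [Real.cos_sub]
  ring

lemma gAux_eval (cF : ℝ) (hcF : 0 ≤ cF) {φ : ℝ} (h0 : 0 ≤ φ) (h3 : φ ≤ π/3) (k : ℤ) :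
    gAux cF (-Real.sin (φ + (k : ℝ) * (π/3)), Real.cos (φ + (k : ℝ) * (π/3)))
      = 2 * cF * (Real.cos φ + Real.sin φ / Real.sqrt 3) := by
  have hπ := Real.pi_pos
  set θ : ℝ := φ + (k : ℝ) * (π/3) with hθ
  set t : ℝ := φ - π/6 with htdef
  have ht1 : -(π/6) ≤ t := by rw [htdef]; linarith
  have ht2 : t ≤ π/6 := by rw [htdef]; linarith
  have harg : ∀ j : ℕ, θ - (π/6 + (j : ℝ) * (π/3)) = t + ((k - (j:ℤ) : ℤ) : ℝ) * (π/3) := by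
    intro j; rw [hθ, htdef]; push_cast; ring
  have c4 : (0:ℝ) ≤ 4 * cF / Real.sqrt 3 := by positivity
  have hub : ∀ j : ℕ, ellAux cF j (-Real.sin θ, Real.cos θ)
      ≤ 4 * cF / Real.sqrt 3 * Real.cos t := by
    intro j
    rw [ellAux_nu, harg]
    exact mul_le_mul_of_nonneg_left (cos_key ht1 ht2 _) c4
  have hmain : gAux cF (-Real.sin θ, Real.cos θ) = 4 * cF / Real.sqrt 3 * Real.cos t := by
    apply le_antisymm
    · simp only [gAux, sup_le_iff]
      exact ⟨⟨⟨⟨⟨hub 0, hub 1⟩, hub 2⟩, hub 3⟩, hub 4⟩, hub 5⟩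
    · set j0 : ℕ := (k % 6).toNat with hj0def
      have hj0 : (j0 : ℤ) = k % 6 := Int.toNat_of_nonneg (Int.emod_nonneg k (by norm_num))
      have hatt : ellAux cF j0 (-Real.sin θ, Real.cos θ)
          = 4 * cF / Real.sqrt 3 * Real.cos t := by
        rw [ellAux_nu, harg]
        congr 1
        have hk6 : (k - (j0:ℤ)) = 6 * (k / 6) := by omega
        rw [show ((k - (j0:ℤ) : ℤ) : ℝ) * (π/3) = ((k / 6 : ℤ) : ℝ) * (2*π) by
          rw [show ((k - (j0:ℤ) : ℤ) : ℝ) = ((6 * (k/6) : ℤ) : ℝ) by rw [← hk6]]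
          push_cast; ring]
        exact Real.cos_add_int_mul_two_pi t _
      have hj5 : j0 ≤ 5 := by omega
      rw [← hatt]
      interval_cases j0
      · exact le_sup_of_le_left (le_sup_of_le_left (le_sup_of_le_left
          (le_sup_of_le_left le_sup_left)))
      · exact le_sup_of_le_left (le_sup_of_le_left (le_sup_of_le_left
          (le_sup_of_le_left le_sup_right)))
      · exact le_sup_of_le_left (le_sup_of_le_left (le_sup_of_le_left le_sup_right))
      · exact le_sup_of_le_left (le_sup_of_le_left le_sup_right)
      · exact le_sup_of_le_left le_sup_right
      · exact le_sup_right
  rw [hmain, htdef, Real.cos_sub, Real.cos_pi_div_six, Real.sin_pi_div_six]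
  have hs3 : Real.sqrt 3 ≠ 0 := by positivity
  have hsq : Real.sqrt 3 * Real.sqrt 3 = 3 := Real.mul_self_sqrt (by norm_num)
  field_simp
  ring_nf


/-- the 1-homogeneous extension `Γ` of the anisotropic surface tension,
determined on unit vectors `ν(φ) = (-sin φ, cos φ)` by the `π/3`-periodic extension of
`φ ↦ 2cF(cos φ + sin φ/√3)` on `[0, π/3]`, is convex on `ℝ²` and positive away from
`0` (hence a Finsler norm), and `Γ(0, ±1) = 2cF`. -/
theorem surface_tension_is_norm (cF : ℝ) (hcF : 0 < cF) (Γ : ℝ × ℝ → ℝ)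
    (hhom : ∀ c : ℝ, 0 ≤ c → ∀ x : ℝ × ℝ, Γ (c • x) = c * Γ x)
    (hval : ∀ φ ∈ Set.Icc (0 : ℝ) (Real.pi / 3), ∀ k : ℤ,
      Γ (-Real.sin (φ + (k : ℝ) * (Real.pi / 3)),
          Real.cos (φ + (k : ℝ) * (Real.pi / 3)))
        = 2 * cF * (Real.cos φ + Real.sin φ / Real.sqrt 3)) :
    ConvexOn ℝ Set.univ Γ ∧ (∀ x : ℝ × ℝ, x ≠ 0 → 0 < Γ x) ∧
      Γ (0, 1) = 2 * cF ∧ Γ (0, -1) = 2 * cF := by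
  have hπ := Real.pi_pos
  have hΓ0 : Γ 0 = 0 := by
    have h := hhom 0 le_rfl 0
    simpa using h
  -- representation of nonzero vectors
  have hrep : ∀ x : ℝ × ℝ, x ≠ 0 → ∃ r θ φ : ℝ, ∃ k : ℤ, 0 < r ∧ 0 ≤ φ ∧ φ ≤ π/3 ∧
      θ = φ + (k : ℝ) * (π/3) ∧ x = r • (-Real.sin θ, Real.cos θ) := by
    intro x hx
    set r : ℝ := Real.sqrt (x.1^2 + x.2^2) with hrdef
    have hx12 : x.1 ≠ 0 ∨ x.2 ≠ 0 := by
      by_contra h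
      push_neg at h
      exact hx (Prod.ext h.1 h.2)
    have hsumpos : 0 < x.1^2 + x.2^2 := by
      rcases hx12 with h | h <;> positivity
    have hr : 0 < r := Real.sqrt_pos.mpr hsumpos
    have hr2 : r^2 = x.1^2 + x.2^2 := Real.sq_sqrt hsumpos.le
    have hc : (x.2/r)^2 + (x.1/r)^2 = 1 := by
      field_simp
      linarith [hr2]
    have hc1 : -1 ≤ x.2/r := by nlinarith [sq_nonneg (x.1/r), sq_nonneg (x.2/r + 1)]
    have hc2 : x.2/r ≤ 1 := by nlinarith [sq_nonneg (x.1/r), sq_nonneg (x.2/r - 1)]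
    obtain ⟨ψ, hcos, hsin⟩ : ∃ ψ : ℝ, Real.cos ψ = x.2/r ∧ Real.sin ψ = -x.1/r := by
      rcases le_or_gt 0 (-x.1/r) with h | h
      · refine ⟨Real.arccos (x.2/r), Real.cos_arccos hc1 hc2, ?_⟩
        rw [Real.sin_arccos, show (1 - (x.2/r)^2) = (-x.1/r)^2 by linear_combination -hc]
        exact Real.sqrt_sq h
      · refine ⟨-Real.arccos (x.2/r), by rw [Real.cos_neg]; exact Real.cos_arccos hc1 hc2, ?_⟩
        rw [Real.sin_neg, Real.sin_arccos,
          show (1 - (x.2/r)^2) = (-x.1/r)^2 by linear_combination -hc,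
          Real.sqrt_sq_eq_abs, abs_of_neg h]
        ring
    set k : ℤ := ⌊ψ / (π/3)⌋ with hkdef
    have hπ3 : 0 < π/3 := by linarith
    have h1 : (k : ℝ) * (π/3) ≤ ψ := by
      have := Int.floor_le (ψ / (π/3))
      rwa [le_div_iff₀ hπ3] at this
    have h2 : ψ < ((k : ℝ) + 1) * (π/3) := by
      have := Int.lt_floor_add_one (ψ / (π/3))
      rw [div_lt_iff₀ hπ3] at this
      exact_mod_cast this
    refine ⟨r, ψ, ψ - (k : ℝ) * (π/3), k, hr, by linarith, by nlinarith, by ring, ?_⟩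
    have : r • ((-Real.sin ψ, Real.cos ψ) : ℝ × ℝ) = (r * -Real.sin ψ, r * Real.cos ψ) := rfl
    rw [this, hsin, hcos]
    have e1 : r * -(-x.1/r) = x.1 := by field_simp
    have e2 : r * (x.2/r) = x.2 := by field_simp
    rw [e1, e2]
  have hGamma_eq : ∀ x : ℝ × ℝ, Γ x = gAux cF x := by
    intro x
    by_cases hx : x = 0
    · subst hx
      rw [hΓ0]
      simp [gAux, ellAux]
    · obtain ⟨r, θ, φ, k, hr, hφ0, hφ3, hθ, hxeq⟩ := hrep x hx
      rw [hxeq, hhom r hr.le, gAux_smul cF hr.le, hθ,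
        hval φ ⟨hφ0, hφ3⟩ k, gAux_eval cF hcF.le hφ0 hφ3 k]
  refine ⟨?_, ?_, ?_, ?_⟩
  · rw [show Γ = gAux cF from funext hGamma_eq]
    exact gAux_convexOn cF
  · intro x hx
    obtain ⟨r, θ, φ, k, hr, hφ0, hφ3, hθ, hxeq⟩ := hrep x hx
    rw [hxeq, hhom r hr.le, hθ, hval φ ⟨hφ0, hφ3⟩ k]
    have hcpos : 0 < Real.cos φ := Real.cos_pos_of_mem_Ioo ⟨by linarith, by linarith⟩
    have hspos : 0 ≤ Real.sin φ := Real.sin_nonneg_of_nonneg_of_le_pi hφ0 (by linarith)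
    have hdiv : 0 ≤ Real.sin φ / Real.sqrt 3 := by positivity
    have : 0 < 2 * cF * (Real.cos φ + Real.sin φ / Real.sqrt 3) := by
      apply mul_pos (by linarith) (by linarith)
    exact mul_pos hr this
  · have h := hval 0 ⟨le_rfl, by linarith⟩ 0
    simpa using h
  · have h := hval 0 ⟨le_rfl, by linarith⟩ 3
    rw [show (0 : ℝ) + ((3 : ℤ) : ℝ) * (π/3) = π by push_cast; ring] at h
    simpa using h
end

section
/- Let D_n^w be a wetting configuration (all n atoms on ∂L_FS, each with one substrate bond, no film bonds; case r > 1, q > 2) and suppose c_S ≥ 6c_F. Then for every configuration D_n of n atoms, V_n(D_n) ≥ V_n(D_n^w) = −c_S·n, with strict inequality whenever D_n is not a wetting configuration. -/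
noncomputable section
open scoped Classical

namespace WetAux

local notation "s3" => Real.sqrt 3

lemma s3_pos : 0 < Real.sqrt 3 := Real.sqrt_pos.2 (by norm_num)

lemma s3_sq : Real.sqrt 3 ^ 2 = 3 := Real.sq_sqrt (by norm_num)

/-- The six directions as explicit pairs. -/
lemma t1_def : t1 = ((1:ℝ), (0:ℝ)) := rfl
lemma t2_def : t2 = ((1/2 : ℝ), Real.sqrt 3 / 2) := rfl

lemma mem_dirs (d : ℝ × ℝ) :
    d ∈ dirs ↔ d = t1 ∨ d = -t1 ∨ d = t2 ∨ d = -t2 ∨ d = t2 - t1 ∨ d = t1 - t2 := by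
  simp [dirs]

lemma dirs_ne_zero {d : ℝ × ℝ} (hd : d ∈ dirs) : d ≠ 0 := by
  have h3 := s3_pos
  rcases (mem_dirs d).1 hd with h|h|h|h|h|h <;> subst h <;>
    simp [t1, t2, Prod.ext_iff] <;> nlinarith [s3_pos]

lemma dirs_dist {d : ℝ × ℝ} (hd : d ∈ dirs) (x : ℝ × ℝ) : edist2 x (x + d) = 1 := by
  have h3 := s3_sq
  have : edist2 x (x + d) = Real.sqrt (d.1 ^ 2 + d.2 ^ 2) := by
    simp only [edist2, Prod.fst_add, Prod.snd_add]
    ring_nf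
  rw [this]
  rcases (mem_dirs d).1 hd with h|h|h|h|h|h <;> subst h <;>
    · rw [Real.sqrt_eq_one]
      simp only [t1, t2, Prod.fst_sub, Prod.snd_sub, Prod.fst_neg, Prod.snd_neg]
      nlinarith [s3_sq]


lemma mem_LF_iff (eFS : ℝ) (p : ℝ × ℝ) :
    p ∈ LF (xF0 eFS) ↔ ∃ (k1 : ℤ) (k2 : ℕ),
      p = ((k1 : ℝ) + (k2 : ℝ) / 2, eFS + (k2 : ℝ) * (Real.sqrt 3 / 2)) := by
  have key : ∀ (k1 : ℤ) (k2 : ℕ), xF0 eFS + (k1 : ℝ) • t1 + (k2 : ℝ) • t2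
      = ((k1 : ℝ) + (k2 : ℝ) / 2, eFS + (k2 : ℝ) * (Real.sqrt 3 / 2)) := by
    intro k1 k2
    simp only [xF0, t1, t2, Prod.ext_iff, Prod.fst_add, Prod.snd_add, Prod.smul_fst,
      Prod.smul_snd, smul_eq_mul]
    constructor <;> ring
  unfold LF
  constructor
  · rintro ⟨k1, k2, rfl⟩
    exact ⟨k1, k2, (key k1 k2)⟩
  · rintro ⟨k1, k2, hp⟩
    exact ⟨k1, k2, by rw [hp, key]⟩

lemma int_class (k1 k2 : ℤ) (h : k1^2 + k1*k2 + k2^2 = 1) :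
    (k1=1∧k2=0)∨(k1=-1∧k2=0)∨(k1=0∧k2=1)∨(k1=0∧k2=-1)∨(k1=-1∧k2=1)∨(k1=1∧k2=-1) := by
  have hb2 : -1 ≤ k2 ∧ k2 ≤ 1 := by
    constructor <;> nlinarith [sq_nonneg (2*k1+k2), sq_nonneg (k2+2), sq_nonneg (k2-2)]
  have hb1 : -1 ≤ k1 ∧ k1 ≤ 1 := by
    constructor <;> nlinarith [sq_nonneg (2*k2+k1), sq_nonneg (k1+2), sq_nonneg (k1-2)]
  obtain ⟨h2l, h2r⟩ := hb2; obtain ⟨h1l, h1r⟩ := hb1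
  interval_cases k1 <;> interval_cases k2 <;> omega

lemma dist_one_dir {eFS : ℝ} {x y : ℝ × ℝ} (hx : x ∈ LF (xF0 eFS)) (hy : y ∈ LF (xF0 eFS))
    (hxy : edist2 x y = 1) : ∃ d ∈ dirs, y = x + d := by
  obtain ⟨a1, a2, rfl⟩ := (mem_LF_iff eFS x).1 hx
  obtain ⟨b1, b2, rfl⟩ := (mem_LF_iff eFS y).1 hy
  set K1 : ℤ := b1 - a1 with hK1
  set K2 : ℤ := (b2 : ℤ) - (a2 : ℤ) with hK2
  have hsq : ((a1:ℝ) + a2/2 - (b1 + b2/2))^2 + (eFS + a2*(Real.sqrt 3/2) - (eFS + b2*(Real.sqrt 3/2)))^2 = 1 := by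
    have := hxy
    unfold edist2 at this
    rw [Real.sqrt_eq_one] at this
    exact this
  have hint : K1^2 + K1*K2 + K2^2 = 1 := by
    have hre : ((K1:ℝ))^2 + (K1:ℝ)*(K2:ℝ) + (K2:ℝ)^2 = 1 := by
      have h3 := s3_sq
      push_cast [hK1, hK2]
      nlinarith [hsq, s3_sq]
    exact_mod_cast hre
  have hb2' : (b2 : ℝ) = (a2 : ℝ) + (K2 : ℝ) := by push_cast [hK2]; ring
  have hb1' : (b1 : ℝ) = (a1 : ℝ) + (K1 : ℝ) := by push_cast [hK1]; ring
  rcases int_class K1 K2 hint with ⟨e1,e2⟩|⟨e1,e2⟩|⟨e1,e2⟩|⟨e1,e2⟩|⟨e1,e2⟩|⟨e1,e2⟩ <;>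
    rw [e1] at hb1' <;> rw [e2] at hb2'
  · exact ⟨t1, by simp [dirs], by simp [t1, Prod.ext_iff, hb1', hb2']; ring⟩
  · exact ⟨-t1, by simp [dirs], by simp [t1, Prod.ext_iff, hb1', hb2']; ring⟩
  · exact ⟨t2, by simp [dirs], by simp [t2, Prod.ext_iff, hb1', hb2']; constructor <;> ring⟩
  · exact ⟨-t2, by simp [dirs], by simp [t2, Prod.ext_iff, hb1', hb2']; constructor <;> ring⟩
  · exact ⟨t2 - t1, by simp [dirs], by simp [t1, t2, Prod.ext_iff, hb1', hb2']; constructor <;> ring⟩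
  · exact ⟨t1 - t2, by simp [dirs], by simp [t1, t2, Prod.ext_iff, hb1', hb2']; constructor <;> ring⟩

lemma s3_ne : Real.sqrt 3 ≠ 0 := ne_of_gt s3_pos

/-- The three "positive" directions. -/
def U : Finset (ℝ × ℝ) := {t1, t2, t2 - t1}

def cUp (E : Finset (ℝ × ℝ)) (x : ℝ × ℝ) : ℕ := (U.filter (fun d => x + d ∈ E)).card
def cDn (E : Finset (ℝ × ℝ)) (x : ℝ × ℝ) : ℕ := (U.filter (fun d => x - d ∈ E)).card
def Bv (E : Finset (ℝ × ℝ)) : ℕ := ∑ x ∈ E, cUp E x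
def degE (E : Finset (ℝ × ℝ)) (x : ℝ × ℝ) : ℕ := (dirs.filter (fun d => x + d ∈ E)).card
def Wv (E : Finset (ℝ × ℝ)) : ℕ := ∑ x ∈ E, degE E x

lemma card_filter_U (P : ℝ × ℝ → Prop) [DecidablePred P] :
    (U.filter P).card =
      (if P t1 then 1 else 0) + (if P t2 then 1 else 0) + (if P (t2 - t1) then 1 else 0) := by
  have h1 : t1 ∉ ({t2, t2 - t1} : Finset (ℝ × ℝ)) := by
    simp [t1, t2, Prod.ext_iff]; norm_num
  have h2 : t2 ∉ ({t2 - t1} : Finset (ℝ × ℝ)) := by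
    simp [t1, t2, Prod.ext_iff]; norm_num
  rw [Finset.card_filter]
  rw [show U = insert t1 (insert t2 ({t2 - t1} : Finset (ℝ × ℝ))) from rfl]
  rw [Finset.sum_insert h1, Finset.sum_insert h2, Finset.sum_singleton]
  ring

lemma card_filter_dirs (P : ℝ × ℝ → Prop) [DecidablePred P] :
    (dirs.filter P).card =
      ((if P t1 then 1 else 0) + (if P t2 then 1 else 0) + (if P (t2 - t1) then 1 else 0))
      + ((if P (-t1) then 1 else 0) + (if P (-t2) then 1 else 0) + (if P (t1 - t2) then 1 else 0)) := by
  have hs := s3_ne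
  have h1 : t1 ∉ ({-t1, t2, -t2, t2 - t1, t1 - t2} : Finset (ℝ × ℝ)) := by
    simp [t1, t2, Prod.ext_iff]; norm_num
  have h2 : -t1 ∉ ({t2, -t2, t2 - t1, t1 - t2} : Finset (ℝ × ℝ)) := by
    simp [t1, t2, Prod.ext_iff]; norm_num
  have h3 : t2 ∉ ({-t2, t2 - t1, t1 - t2} : Finset (ℝ × ℝ)) := by
    simp [t1, t2, Prod.ext_iff]; norm_num
    intro h; exact s3_ne (by linarith)
  have h4 : -t2 ∉ ({t2 - t1, t1 - t2} : Finset (ℝ × ℝ)) := by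
    simp [t1, t2, Prod.ext_iff]; norm_num
    intro h; exact s3_ne (by linarith)
  have h5 : t2 - t1 ∉ ({t1 - t2} : Finset (ℝ × ℝ)) := by
    simp [t1, t2, Prod.ext_iff]; norm_num
  rw [Finset.card_filter]
  rw [show dirs = insert t1 (insert (-t1) (insert t2 (insert (-t2)
    (insert (t2 - t1) ({t1 - t2} : Finset (ℝ × ℝ)))))) from rfl]
  rw [Finset.sum_insert h1, Finset.sum_insert h2, Finset.sum_insert h3,
    Finset.sum_insert h4, Finset.sum_insert h5, Finset.sum_singleton]
  ring

lemma degE_eq (E : Finset (ℝ × ℝ)) (x : ℝ × ℝ) : degE E x = cUp E x + cDn E x := by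
  unfold degE cUp cDn
  rw [card_filter_dirs, card_filter_U, card_filter_U]
  have e1 : x - t1 = x + -t1 := by ring
  have e2 : x - t2 = x + -t2 := by ring
  have e3 : x - (t2 - t1) = x + (t1 - t2) := by ring
  rw [e1, e2, e3]

lemma zero_not_mem_U : (0 : ℝ × ℝ) ∉ U := by
  have hs := s3_ne
  simp [U, t1, t2, Prod.ext_iff]
  norm_num

lemma sum_cDn_eq (E : Finset (ℝ × ℝ)) : ∑ x ∈ E, cDn E x = ∑ x ∈ E, cUp E x := by
  unfold cDn cUp
  simp only [Finset.card_filter]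
  rw [Finset.sum_comm (s := E) (t := U), Finset.sum_comm (s := E) (t := U)]
  apply Finset.sum_congr rfl
  intro d _
  rw [← Finset.card_filter, ← Finset.card_filter]
  apply Finset.card_bij' (fun x _ => x - d) (fun y _ => y + d)
  · intro a ha
    simp only [Finset.mem_filter] at ha ⊢
    exact ⟨ha.2, by rw [sub_add_cancel]; exact ha.1⟩
  · intro a ha
    simp only [Finset.mem_filter] at ha ⊢
    exact ⟨ha.2, by rw [add_sub_cancel_right]; exact ha.1⟩
  · intro a _; rw [sub_add_cancel]
  · intro a _; rw [add_sub_cancel_right]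

lemma Wv_eq_two_Bv (E : Finset (ℝ × ℝ)) : Wv E = 2 * Bv E := by
  unfold Wv Bv
  calc ∑ x ∈ E, degE E x = ∑ x ∈ E, (cUp E x + cDn E x) := by
        exact Finset.sum_congr rfl fun x _ => degE_eq E x
    _ = ∑ x ∈ E, cUp E x + ∑ x ∈ E, cDn E x := Finset.sum_add_distrib
    _ = 2 * ∑ x ∈ E, cUp E x := by rw [sum_cDn_eq]; ring

lemma cUp_insert (E' : Finset (ℝ × ℝ)) {x : ℝ × ℝ} (hx' : x ∉ E') (z : ℝ × ℝ) :
    cUp (insert x E') z = cUp E' z + (U.filter (fun d => z + d = x)).card := by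
  unfold cUp
  simp only [Finset.card_filter]
  rw [← Finset.sum_add_distrib]
  apply Finset.sum_congr rfl
  intro d _
  by_cases h1 : z + d ∈ E'
  · have h2 : ¬ (z + d = x) := fun h => hx' (h ▸ h1)
    simp [h1, h2, Finset.mem_insert]
  · by_cases h2 : z + d = x <;> simp [h1, h2, hx', Finset.mem_insert]

lemma filter_self_card (x : ℝ × ℝ) : (U.filter (fun d => x + d = x)).card = 0 := by
  rw [Finset.card_eq_zero, Finset.filter_eq_empty_iff]
  intro d hd h
  exact zero_not_mem_U (by rwa [add_eq_left.1 h] at hd)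

lemma Bv_erase {E : Finset (ℝ × ℝ)} {x : ℝ × ℝ} (hx : x ∈ E) :
    Bv E = Bv (E.erase x) + cUp (E.erase x) x + cDn (E.erase x) x := by
  set E' := E.erase x with hE'
  have hx' : x ∉ E' := Finset.notMem_erase x E
  have hins : E = insert x E' := (Finset.insert_erase hx).symm
  have hsum : ∑ y ∈ E', (U.filter (fun d => y + d = x)).card = cDn E' x := by
    unfold cDn
    simp only [Finset.card_filter]
    rw [Finset.sum_comm (s := E') (t := U)]
    apply Finset.sum_congr rfl
    intro d _
    have : ∀ y : ℝ × ℝ, (y + d = x) = (y = x - d) := by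
      intro y; rw [eq_sub_iff_add_eq]
    simp only [this]
    rw [Finset.sum_ite_eq' E' (x - d) (fun _ => 1)]
  calc Bv E = cUp E x + ∑ y ∈ E', cUp E y := (Finset.add_sum_erase E (cUp E) hx).symm
    _ = cUp E' x + ∑ y ∈ E', (cUp E' y + (U.filter (fun d => y + d = x)).card) := by
        rw [hins]
        rw [cUp_insert E' hx' x, filter_self_card, add_zero]
        congr 1
        apply Finset.sum_congr rfl
        intro y _
        rw [cUp_insert E' hx' y]
    _ = Bv E' + cUp E' x + cDn E' x := by
        rw [Finset.sum_add_distrib, hsum]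
        unfold Bv; ring

lemma cUp_eq (E : Finset (ℝ × ℝ)) (x : ℝ × ℝ) :
    cUp E x = (if x + t1 ∈ E then 1 else 0) + (if x + t2 ∈ E then 1 else 0)
      + (if x + (t2 - t1) ∈ E then 1 else 0) :=
  card_filter_U _

lemma cDn_eq (E : Finset (ℝ × ℝ)) (x : ℝ × ℝ) :
    cDn E x = (if x - t1 ∈ E then 1 else 0) + (if x - t2 ∈ E then 1 else 0)
      + (if x - (t2 - t1) ∈ E then 1 else 0) :=
  card_filter_U _

lemma sub_snd {q r : ℕ} {eFS : ℝ} {p : ℝ × ℝ} (h : hasSub q r eFS p) : p.2 = eFS := by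
  obtain ⟨m, _, rfl⟩ := h; rfl

lemma sub_not_adj {q r : ℕ} (hr : 1 < r) (hrq : 2 * r ≤ q) {eFS : ℝ} {p : ℝ × ℝ}
    (h : hasSub q r eFS p) : ¬ hasSub q r eFS (p + t1) := by
  obtain ⟨m, hm, rfl⟩ := h
  rintro ⟨m', hm', heq⟩
  have hf : (m : ℝ) + 1 = (m' : ℝ) := by
    have := congrArg Prod.fst heq
    simpa [t1] using this
  have hm'' : m' = m + 1 := by exact_mod_cast hf.symm
  subst hm''
  rcases hm with h1 | h1 <;> rcases hm' with h2 | h2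
  · have hd : (q:ℤ) ∣ 1 := by
      have := dvd_sub h2 h1
      have e : m + 1 - m = (1:ℤ) := by ring
      rwa [e] at this
    have := Int.le_of_dvd one_pos hd; omega
  · have hd : (q:ℤ) ∣ (r:ℤ) - 1 := by
      have := dvd_sub h1 h2
      have e : m - (m + 1 - (r:ℤ)) = (r:ℤ) - 1 := by ring
      rwa [e] at this
    have := Int.le_of_dvd (by omega) hd; omega
  · have hd : (q:ℤ) ∣ (r:ℤ) + 1 := by
      have := dvd_sub h2 h1
      have e : m + 1 - (m - (r:ℤ)) = (r:ℤ) + 1 := by ring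
      rwa [e] at this
    have := Int.le_of_dvd (by omega) hd; omega
  · have hd : (q:ℤ) ∣ 1 := by
      have := dvd_sub h2 h1
      have e : m + 1 - (r:ℤ) - (m - (r:ℤ)) = (1:ℤ) := by ring
      rwa [e] at this
    have := Int.le_of_dvd one_pos hd; omega

lemma bottom_coord {eFS : ℝ} {p : ℝ × ℝ} (hp : p ∈ LF (xF0 eFS)) (h2 : p.2 = eFS) :
    ∃ m : ℤ, p.1 = (m : ℝ) := by
  obtain ⟨k1, k2, rfl⟩ := (mem_LF_iff eFS p).1 hp
  have h2' : eFS + (k2 : ℝ) * (Real.sqrt 3 / 2) = eFS := h2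
  have hk2 : (k2 : ℝ) = 0 := by
    have hz : (k2 : ℝ) * (Real.sqrt 3 / 2) = 0 := by linarith
    rcases mul_eq_zero.1 hz with h | h
    · exact h
    · exact absurd h (by simp [s3_ne])
  exact ⟨k1, by show (k1:ℝ) + (k2:ℝ)/2 = _; rw [hk2]; ring⟩

/-- Number of substrate-bonded atoms. -/
def Sv (q r : ℕ) (eFS : ℝ) (E : Finset (ℝ × ℝ)) : ℕ :=
  (E.filter (hasSub q r eFS)).card

lemma Sv_erase (q r : ℕ) (eFS : ℝ) {E : Finset (ℝ × ℝ)} {x : ℝ × ℝ} (hx : x ∈ E) :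
    Sv q r eFS E = Sv q r eFS (E.erase x) + (if hasSub q r eFS x then 1 else 0) := by
  unfold Sv
  rw [Finset.filter_erase]
  by_cases h : hasSub q r eFS x
  · have hxf : x ∈ E.filter (hasSub q r eFS) := Finset.mem_filter.2 ⟨hx, h⟩
    rw [if_pos h, Finset.card_erase_add_one hxf]
  · rw [if_neg h, Finset.erase_eq_of_notMem (fun hc => h (Finset.mem_filter.1 hc).2), add_zero]

lemma bottom (q r : ℕ) (eFS : ℝ) (hr : 1 < r) (hrq : 2 * r ≤ q) :
    ∀ n : ℕ, ∀ E : Finset (ℝ × ℝ), E.card ≤ n → (↑E ⊆ LF (xF0 eFS)) →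
      (∀ y ∈ E, y.2 = eFS) →
      (Bv E + 3 * Sv q r eFS E ≤ 3 * E.card)
      ∧ ((∃ z ∈ E, ¬ hasSub q r eFS z) → Bv E + 3 * Sv q r eFS E + 1 ≤ 3 * E.card)
      ∧ ((∃ z ∈ E, (∀ y ∈ E, y.1 ≤ z.1) ∧ ¬ hasSub q r eFS z) →
          Bv E + 3 * Sv q r eFS E + 2 ≤ 3 * E.card) := by
  intro n
  induction n with
  | zero =>
    intro E hc _ _
    have hE : E = ∅ := Finset.card_eq_zero.1 (Nat.le_zero.1 hc)
    subst hE
    exact ⟨by simp [Bv, Sv], by simp, by simp⟩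
  | succ n IH =>
    intro E hc hLF hrow
    by_cases hne : E.Nonempty
    case neg =>
      have hE : E = ∅ := Finset.not_nonempty_iff_eq_empty.1 hne
      subst hE
      exact ⟨by simp [Bv, Sv], by simp, by simp⟩
    case pos =>
    obtain ⟨x, hx, hmax⟩ := Finset.exists_max_image E Prod.fst hne
    set E' := E.erase x with hE'def
    have hcard : E'.card + 1 = E.card := Finset.card_erase_add_one hx
    have hc' : E'.card ≤ n := by omega
    have hLF' : ↑E' ⊆ LF (xF0 eFS) := fun y hy =>
      hLF (Finset.mem_coe.2 (Finset.mem_of_mem_erase (Finset.mem_coe.1 hy)))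
    have hrow' : ∀ y ∈ E', y.2 = eFS := fun y hy => hrow y (Finset.mem_of_mem_erase hy)
    obtain ⟨IH1, IH2, IH3⟩ := IH E' hc' hLF' hrow'
    have hx2 : x.2 = eFS := hrow x hx
    have hs3 := s3_pos
    have hup1 : x + t2 ∉ E := by
      intro h
      have h2 : x.2 + Real.sqrt 3 / 2 = eFS := hrow _ h
      rw [hx2] at h2; linarith
    have hup2 : x + (t2 - t1) ∉ E := by
      intro h
      have h2 : x.2 + (Real.sqrt 3 / 2 - 0) = eFS := hrow _ h
      rw [hx2] at h2; linarith
    have hr1 : x + t1 ∉ E := by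
      intro h
      have h2 : x.1 + 1 ≤ x.1 := hmax _ h
      linarith
    have hdn2 : x - t2 ∉ E := by
      intro h
      have h2 : x.2 - Real.sqrt 3 / 2 = eFS := hrow _ h
      rw [hx2] at h2; linarith
    have hdn3 : x - (t2 - t1) ∉ E := by
      intro h
      have h2 : x.2 - (Real.sqrt 3 / 2 - 0) = eFS := hrow _ h
      rw [hx2] at h2; linarith
    have hup1' : x + t2 ∉ E' := fun h => hup1 (Finset.mem_of_mem_erase h)
    have hup2' : x + (t2 - t1) ∉ E' := fun h => hup2 (Finset.mem_of_mem_erase h)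
    have hr1' : x + t1 ∉ E' := fun h => hr1 (Finset.mem_of_mem_erase h)
    have hdn2' : x - t2 ∉ E' := fun h => hdn2 (Finset.mem_of_mem_erase h)
    have hdn3' : x - (t2 - t1) ∉ E' := fun h => hdn3 (Finset.mem_of_mem_erase h)
    have hBv : Bv E = Bv E' + cUp E' x + cDn E' x := Bv_erase hx
    have hcup : cUp E' x = 0 := by
      rw [cUp_eq, if_neg hr1', if_neg hup1', if_neg hup2']
    have hcdn : cDn E' x = if x - t1 ∈ E' then 1 else 0 := by
      rw [cDn_eq, if_neg hdn2', if_neg hdn3']; simp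
    have hSv : Sv q r eFS E = Sv q r eFS E' + (if hasSub q r eFS x then 1 else 0) :=
      Sv_erase q r eFS hx
    by_cases hsx : hasSub q r eFS x
    · -- x is a substrate atom
      have hxeq : ∀ z ∈ E, (∀ y ∈ E, y.1 ≤ z.1) → z = x := by
        intro z hz hzmax
        have h1 : z.1 = x.1 := le_antisymm (hmax z hz) (hzmax x hx)
        have h2 : z.2 = x.2 := by rw [hrow z hz, hx2]
        exact Prod.ext_iff.2 ⟨h1, h2⟩
      have hcontr : ¬ (∃ z ∈ E, (∀ y ∈ E, y.1 ≤ z.1) ∧ ¬ hasSub q r eFS z) := by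
        rintro ⟨z, hz, hzmax, hzns⟩
        exact hzns ((hxeq z hz hzmax) ▸ hsx)
      by_cases hlt : x - t1 ∈ E'
      · -- left neighbor present
        have hxt : (x - t1) + t1 = x := sub_add_cancel x t1
        have hnsub : ¬ hasSub q r eFS (x - t1) := by
          intro h
          exact (sub_not_adj hr hrq h) (by rw [hxt]; exact hsx)
        have hmax' : ∀ y ∈ E', y.1 ≤ (x - t1).1 := by
          intro z hz
          have hzE := Finset.mem_of_mem_erase hz
          obtain ⟨mz, hmz⟩ := bottom_coord (hLF (Finset.mem_coe.2 hzE)) (hrow z hzE)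
          obtain ⟨mx, hmx⟩ := bottom_coord (hLF (Finset.mem_coe.2 hx)) hx2
          have hne' : z ≠ x := Finset.ne_of_mem_erase hz
          have h1 : z.1 ≠ x.1 := by
            intro h
            exact hne' (Prod.ext_iff.2 ⟨h, by rw [hrow z hzE, hx2]⟩)
          have hlez : (mz : ℝ) ≤ (mx : ℝ) := by rw [← hmz, ← hmx]; exact hmax z hzE
          have hlez' : mz ≤ mx := by exact_mod_cast hlez
          have hnem : mz ≠ mx := fun h => h1 (by rw [hmz, hmx, h])
          have hmle : mz ≤ mx - 1 := by omega
          have hmle' : (mz : ℝ) ≤ (mx : ℝ) - 1 := by exact_mod_cast hmle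
          have : (x - t1).1 = x.1 - 1 := rfl
          rw [this, hmz, ← hmx] at *
          linarith
        have hIH3' := IH3 ⟨x - t1, hlt, hmax', hnsub⟩
        have e1 : Bv E = Bv E' + 1 := by rw [hBv, hcup, hcdn, if_pos hlt]
        have e2 : Sv q r eFS E = Sv q r eFS E' + 1 := by rw [hSv, if_pos hsx]
        refine ⟨by omega, fun _ => by omega, fun h => absurd h hcontr⟩
      · have e1 : Bv E = Bv E' := by rw [hBv, hcup, hcdn, if_neg hlt]; simp
        have e2 : Sv q r eFS E = Sv q r eFS E' + 1 := by rw [hSv, if_pos hsx]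
        refine ⟨by omega, ?_, fun h => absurd h hcontr⟩
        rintro ⟨z, hz, hzns⟩
        have hzne : z ≠ x := fun h => hzns (h ▸ hsx)
        have hIH2' := IH2 ⟨z, Finset.mem_erase.2 ⟨hzne, hz⟩, hzns⟩
        omega
    · -- x not a substrate atom
      have e2 : Sv q r eFS E = Sv q r eFS E' := by rw [hSv, if_neg hsx, add_zero]
      by_cases hlt : x - t1 ∈ E'
      · have e1 : Bv E = Bv E' + 1 := by rw [hBv, hcup, hcdn, if_pos hlt]
        exact ⟨by omega, fun _ => by omega, fun _ => by omega⟩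
      · have e1 : Bv E = Bv E' := by rw [hBv, hcup, hcdn, if_neg hlt]; simp
        exact ⟨by omega, fun _ => by omega, fun _ => by omega⟩

lemma LF_snd_ge {eFS : ℝ} {p : ℝ × ℝ} (hp : p ∈ LF (xF0 eFS)) : eFS ≤ p.2 := by
  obtain ⟨k1, k2, rfl⟩ := (mem_LF_iff eFS p).1 hp
  show eFS ≤ eFS + (k2 : ℝ) * (Real.sqrt 3 / 2)
  have : (0:ℝ) ≤ (k2 : ℝ) * (Real.sqrt 3 / 2) := by positivity
  linarith

lemma main (q r : ℕ) (eFS : ℝ) (hr : 1 < r) (hrq : 2 * r ≤ q) :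
    ∀ n : ℕ, ∀ E : Finset (ℝ × ℝ), E.card ≤ n → (↑E ⊆ LF (xF0 eFS)) →
      (Bv E + 3 * Sv q r eFS E ≤ 3 * E.card)
      ∧ ((∃ z ∈ E, ¬ hasSub q r eFS z) → Bv E + 3 * Sv q r eFS E + 1 ≤ 3 * E.card) := by
  intro n
  induction n with
  | zero =>
    intro E hc _
    have hE : E = ∅ := Finset.card_eq_zero.1 (Nat.le_zero.1 hc)
    subst hE
    exact ⟨by simp [Bv, Sv], by simp⟩
  | succ n IH =>
    intro E hc hLF
    by_cases hrow : ∀ y ∈ E, y.2 = eFS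
    · obtain ⟨h1, h2, _⟩ := bottom q r eFS hr hrq (n+1) E hc hLF hrow
      exact ⟨h1, h2⟩
    · push_neg at hrow
      obtain ⟨y0, hy0, hy0ne⟩ := hrow
      have hne : E.Nonempty := ⟨y0, hy0⟩
      have hy0gt : eFS < y0.2 :=
        lt_of_le_of_ne (LF_snd_ge (hLF (Finset.mem_coe.2 hy0))) (Ne.symm hy0ne)
      obtain ⟨x, hx, hmax⟩ :=
        Finset.exists_max_image E (fun p => toLex (p.2, p.1) : ℝ × ℝ → ℝ ×ₗ ℝ) hne
      have hmax' : ∀ z ∈ E, z.2 < x.2 ∨ (z.2 = x.2 ∧ z.1 ≤ x.1) := by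
        intro z hz
        exact Prod.Lex.le_iff.1 (hmax z hz)
      have hsnd : ∀ z ∈ E, z.2 ≤ x.2 := by
        intro z hz
        rcases hmax' z hz with h | h
        · exact le_of_lt h
        · exact le_of_eq h.1
      have hx2gt : eFS < x.2 := lt_of_lt_of_le hy0gt (hsnd y0 hy0)
      have hsx : ¬ hasSub q r eFS x := fun h => absurd (sub_snd h) (ne_of_gt hx2gt)
      set E' := E.erase x with hE'def
      have hcard : E'.card + 1 = E.card := Finset.card_erase_add_one hx
      have hc' : E'.card ≤ n := by omega
      have hLF' : ↑E' ⊆ LF (xF0 eFS) := fun y hy =>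
        hLF (Finset.mem_coe.2 (Finset.mem_of_mem_erase (Finset.mem_coe.1 hy)))
      obtain ⟨IH1, IH2⟩ := IH E' hc' hLF'
      have hs3 := s3_pos
      have hup1 : x + t2 ∉ E := by
        intro h
        rcases hmax' _ h with h2 | h2
        · have : x.2 + Real.sqrt 3 / 2 < x.2 := h2
          linarith
        · have : x.2 + Real.sqrt 3 / 2 = x.2 := h2.1
          linarith
      have hup2 : x + (t2 - t1) ∉ E := by
        intro h
        rcases hmax' _ h with h2 | h2
        · have : x.2 + (Real.sqrt 3 / 2 - 0) < x.2 := h2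
          linarith
        · have : x.2 + (Real.sqrt 3 / 2 - 0) = x.2 := h2.1
          linarith
      have hr1 : x + t1 ∉ E := by
        intro h
        rcases hmax' _ h with h2 | h2
        · have : x.2 + 0 < x.2 := h2
          linarith
        · have : x.1 + 1 ≤ x.1 := h2.2
          linarith
      have hup1' : x + t2 ∉ E' := fun h => hup1 (Finset.mem_of_mem_erase h)
      have hup2' : x + (t2 - t1) ∉ E' := fun h => hup2 (Finset.mem_of_mem_erase h)
      have hr1' : x + t1 ∉ E' := fun h => hr1 (Finset.mem_of_mem_erase h)
      have hBv : Bv E = Bv E' + cUp E' x + cDn E' x := Bv_erase hx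
      have hcup : cUp E' x = 0 := by
        rw [cUp_eq, if_neg hr1', if_neg hup1', if_neg hup2']
      have hSv : Sv q r eFS E = Sv q r eFS E' := by
        rw [Sv_erase q r eFS hx, if_neg hsx, add_zero]
      by_cases hlt : x - t1 ∈ E'
      · have hnsub : ¬ hasSub q r eFS (x - t1) := by
          intro h
          have : (x - t1).2 = eFS := sub_snd h
          have h2 : x.2 - 0 = eFS := this
          linarith
        have hIH2' := IH2 ⟨x - t1, hlt, hnsub⟩
        have hcdnle : cDn E' x ≤ 3 := by
          rw [cDn_eq]; split_ifs <;> omega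
        refine ⟨by omega, fun _ => by omega⟩
      · have hcdnle : cDn E' x ≤ 2 := by
          rw [cDn_eq, if_neg hlt]; split_ifs <;> omega
        refine ⟨by omega, fun _ => by omega⟩

lemma inner_sum (eFS cF : ℝ) {E : Finset (ℝ × ℝ)} (hLF : ↑E ⊆ LF (xF0 eFS))
    {x : ℝ × ℝ} (hx : x ∈ E) :
    ∑ y ∈ E.erase x, vFF cF (edist2 x y) = -(cF * (degE E x : ℝ)) := by
  unfold vFF
  rw [Finset.sum_ite, Finset.sum_const, Finset.sum_const_zero, add_zero]
  have hcard : ((E.erase x).filter (fun y => edist2 x y = 1)).card = degE E x := by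
    unfold degE
    apply Finset.card_bij' (fun y _ => y - x) (fun d _ => x + d)
    · intro y hy
      simp only [Finset.mem_filter, Finset.mem_erase] at hy
      obtain ⟨⟨hyne, hyE⟩, hyd⟩ := hy
      obtain ⟨d, hd, hyd'⟩ :=
        dist_one_dir (hLF (Finset.mem_coe.2 hx)) (hLF (Finset.mem_coe.2 hyE)) hyd
      simp only [Finset.mem_filter]
      constructor
      · rw [hyd']
        have : x + d - x = d := by ring
        rw [this]; exact hd
      · have : x + (y - x) = y := by ring
        rw [this]; exact hyE
    · intro d hd
      simp only [Finset.mem_filter] at hd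
      obtain ⟨hdd, hdE⟩ := hd
      simp only [Finset.mem_filter, Finset.mem_erase]
      refine ⟨⟨?_, hdE⟩, dirs_dist hdd x⟩
      intro h
      apply dirs_ne_zero hdd
      have : d = x + d - x := by ring
      rw [this, h]; ring
    · intro y _
      show x + (y - x) = y
      ring
    · intro d _
      show (x + d) - x = d
      ring
  rw [hcard, nsmul_eq_mul]
  ring

lemma Vtot_eq (q r : ℕ) (eFS cF cS : ℝ) {E : Finset (ℝ × ℝ)} (hLF : ↑E ⊆ LF (xF0 eFS)) :
    Vtot cF (v1sub q r eFS cS) E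
      = -(cF * (Wv E : ℝ)) + -(cS * (Sv q r eFS E : ℝ)) := by
  unfold Vtot
  congr 1
  · calc ∑ x ∈ E, ∑ y ∈ E.erase x, vFF cF (edist2 x y)
        = ∑ x ∈ E, -(cF * (degE E x : ℝ)) :=
          Finset.sum_congr rfl (fun x hx => inner_sum eFS cF hLF hx)
      _ = -(cF * (Wv E : ℝ)) := by
          unfold Wv
          push_cast
          rw [Finset.sum_neg_distrib, Finset.mul_sum]
  · unfold v1sub
    rw [Finset.sum_ite, Finset.sum_const, Finset.sum_const_zero, add_zero, nsmul_eq_mul]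
    unfold Sv
    ring

end WetAux

/-- model `M¹_Λ(1,q,r)` with `r > 1` (so `q > 2`).  If `cS ≥ 6cF` then
every `n`-atom configuration has energy at least `-cS·n` (the wetting energy), with
strict inequality whenever the configuration is not a wetting configuration (i.e. not
entirely contained in `∂L_FS`). -/
theorem wetting_sufficiency (q r : ℕ) (hr : 1 < r) (hrq : 2 * r ≤ q)
    (eFS cF cS : ℝ) (heFS : 0 < eFS) (hcF : 0 < cF) (hcS : 0 < cS)
    (hwet : 6 * cF ≤ cS)
    (D : Finset (ℝ × ℝ)) (hD : ↑D ⊆ LF (xF0 eFS)) :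
    -cS * D.card ≤ Vtot cF (v1sub q r eFS cS) D ∧
      (¬ (∀ x ∈ D, hasSub q r eFS x) →
        -cS * D.card < Vtot cF (v1sub q r eFS cS) D) := by
  obtain ⟨hA, hB⟩ := WetAux.main q r eFS hr hrq D.card D le_rfl hD
  have hW : WetAux.Wv D = 2 * WetAux.Bv D := WetAux.Wv_eq_two_Bv D
  have hVeq := WetAux.Vtot_eq q r eFS cF cS hD
  have hSle : WetAux.Sv q r eFS D ≤ D.card := Finset.card_filter_le _ _
  have hcast : (WetAux.Sv q r eFS D : ℝ) ≤ (D.card : ℝ) := by exact_mod_cast hSle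
  constructor
  · rw [hVeq]
    have h1n : WetAux.Wv D + 6 * WetAux.Sv q r eFS D ≤ 6 * D.card := by omega
    have h1 : (WetAux.Wv D : ℝ) + 6 * (WetAux.Sv q r eFS D : ℝ) ≤ 6 * (D.card : ℝ) := by
      exact_mod_cast h1n
    nlinarith [mul_nonneg (by linarith : (0:ℝ) ≤ cS - 6 * cF)
        (by linarith : (0:ℝ) ≤ (D.card : ℝ) - (WetAux.Sv q r eFS D : ℝ)),
      mul_le_mul_of_nonneg_left h1 hcF.le]
  · intro hns
    push_neg at hns
    have hB' := hB hns
    rw [hVeq]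
    have h1n : WetAux.Wv D + 6 * WetAux.Sv q r eFS D + 2 ≤ 6 * D.card := by omega
    have h1 : (WetAux.Wv D : ℝ) + 6 * (WetAux.Sv q r eFS D : ℝ) + 2 ≤ 6 * (D.card : ℝ) := by
      exact_mod_cast h1n
    nlinarith [mul_nonneg (by linarith : (0:ℝ) ≤ cS - 6 * cF)
        (by linarith : (0:ℝ) ≤ (D.card : ℝ) - (WetAux.Sv q r eFS D : ℝ)),
      mul_le_mul_of_nonneg_left h1 hcF.le]
end
end
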